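/- arXiv:2002.01645 — 6 statements merged into one kernel-verified Lean document; each statement's English description precedes it below -/
import Mathlib

section
/- Under the weighted stochastic block model sample with common communities and the linear response model, the expectation of the matrix Σ̂^{A,Y} = (1/N)∑_{m=1}^N Y_m A^{(m)} satisfies E[Σ̂^{A,Y}] = Z F Zᵀ − diag(Z F Zᵀ), where F ∈ ℝ^{K×K} is the symmetric matrix with entries F_{jk} = 2 Ψ_{jk} C_{jk} + 2 ∑_{(s,t)∈P} ((1/N)∑_{m=1}^N R^{(m)}_{jk} R^{(m)}_{z_s z_t}) C_{z_s z_t}, and diag(M) denotes the diagonal matrix with the same diagonal as M. -/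
open MeasureTheory ProbabilityTheory Matrix BigOperators

/-!
Write `Yₘ = ⟨Aᵐ, B⟩ + σ εₘ`. Since `Aᵐ` is symmetric with zero diagonal and `B_{st} = C_{z_s z_t}`
is symmetric, `Yₘ = ∑_{s<t} 2 C_{z_s z_t} Aᵐ_{st} + σ εₘ` is a linear combination of the
independent edge variables plus independent centred noise. Hence, for `u < v`,
`E[Yₘ Aᵐ_{uv}] = (∑_{s<t} 2 C_{z_s z_t} R⁽ᵐ⁾_{z_s z_t}) R⁽ᵐ⁾_{z_u z_v}
  + 2 C_{z_u z_v} Ψ⁽ᵐ⁾_{z_u z_v}`, the variance entering only through the term `(s, t) = (u, v)`;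
averaging over `m` gives `F_{z_u z_v}`. The diagonal vanishes because `Aᵐ_{uu} = 0`, and the
lower triangle follows by symmetry of `Aᵐ` and `F`.
-/

theorem Matrix.mul_mul_transpose_eq_submatrix {ι κ R : Type*} [Fintype κ] [DecidableEq κ]
    [NonAssocSemiring R] {z : ι → κ} {Z : Matrix ι κ R}
    (hZ : ∀ u k, Z u k = if z u = k then 1 else 0) (G : Matrix κ κ R) :
    Z * G * Zᵀ = G.submatrix z z := by
  ext u v
  simp [mul_apply, hZ]

theorem Finset.sum_sum_eq_two_mul_sum_lt {ι R : Type*} [Fintype ι] [LinearOrder ι]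
    [NonAssocSemiring R] (f : ι → ι → R) (hsymm : ∀ s t, f s t = f t s) (hdiag : ∀ s, f s s = 0) :
    ∑ s, ∑ t, f s t = 2 * ∑ p ∈ univ.filter (fun p : ι × ι => p.1 < p.2), f p.1 p.2 := by
  have hsplit : ∀ s t, f s t = (if s < t then f s t else 0) + (if t < s then f t s else 0) := by
    intro s t
    rcases lt_trichotomy s t with h | rfl | h
    · simp [h, h.not_gt]
    · simp [hdiag]
    · simp [h, h.not_gt, hsymm s t]
  rw [Fintype.sum_congr _ _ fun s => Fintype.sum_congr _ _ fun t => hsplit s t]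
  simp only [Finset.sum_add_distrib]
  rw [Finset.sum_comm (f := fun s t => if t < s then f t s else 0), two_mul, Finset.sum_filter,
    ← Finset.univ_product_univ, Finset.sum_product]

theorem Matrix.trace_transpose_mul_eq_two_mul_sum_lt {n R : Type*} [Fintype n] [LinearOrder n]
    [NonAssocSemiring R] {B M : Matrix n n R} (hB : B.IsSymm) (hM : M.IsSymm)
    (hMdiag : ∀ s, M s s = 0) :
    trace (Bᵀ * M) = 2 * ∑ p : {p : n × n // p.1 < p.2}, B p.1.1 p.1.2 * M p.1.1 p.1.2 := by
  have hfrobenius : trace (Bᵀ * M) = ∑ s, ∑ t, B s t * M s t := by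
    simp only [trace, diag_apply, mul_apply, transpose_apply]
    exact Finset.sum_comm
  rw [hfrobenius, Finset.sum_sum_eq_two_mul_sum_lt _ (fun s t => by rw [hB.apply, hM.apply])
    fun s => by rw [hMdiag, mul_zero],
    Finset.sum_subtype (F := inferInstance) _ (p := fun p : n × n => p.1 < p.2) (by simp)]

theorem Matrix.IsSymm.eq_sub_diagonal_of_forall_lt {n R : Type*} [LinearOrder n] [AddGroup R]
    {M G : Matrix n n R} (hM : M.IsSymm) (hG : G.IsSymm) (hMdiag : ∀ u, M u u = 0)
    (hlt : ∀ u v, u < v → M u v = G u v) :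
    M = G - diagonal fun u => G u u := by
  ext u v
  rcases lt_trichotomy u v with huv | rfl | hvu
  · simp [hlt u v huv, huv.ne]
  · simp [hMdiag]
  · simp [← hM.apply u v, ← hG.apply u v, hlt v u hvu, hvu.ne']

theorem mean_over_samples_eq {N n K : ℕ} {z : Fin n → Fin K}
    {R Ψ : Fin N → Matrix (Fin K) (Fin K) ℝ} {C F : Matrix (Fin K) (Fin K) ℝ}
    (hF : ∀ j k, F j k = 2 * ((1 / (N : ℝ)) * ∑ m, Ψ m j k) * C j k
      + 2 * ∑ p ∈ Finset.univ.filter (fun p : Fin n × Fin n => p.1 < p.2),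
          ((1 / (N : ℝ)) * ∑ m, R m j k * R m (z p.1) (z p.2)) * C (z p.1) (z p.2))
    (j k : Fin K) :
    1 / (N : ℝ) * ∑ m, ((∑ p : {p : Fin n × Fin n // p.1 < p.2},
      2 * C (z p.1.1) (z p.1.2) * R m (z p.1.1) (z p.1.2)) * R m j k + 2 * C j k * Ψ m j k)
      = F j k := by
  rw [hF, Finset.sum_subtype (F := inferInstance) _ (p := fun p : Fin n × Fin n => p.1 < p.2)
    (by simp), Finset.sum_add_distrib, mul_add, add_comm]
  congr 1
  · rw [← Finset.mul_sum]
    ring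
  · simp only [Finset.mul_sum, Finset.sum_mul]
    rw [Finset.sum_comm]
    exact Finset.sum_congr rfl fun _ _ => Finset.sum_congr rfl fun _ _ => by ring

section LinearResponse

variable {Ω ι : Type*} [MeasurableSpace Ω] {μ : Measure Ω} {X : ι → Ω → ℝ}

theorem integral_mul_eq_mul_add_ite_variance [IsProbabilityMeasure μ] [DecidableEq ι]
    (hX : ∀ i, MemLp (X i) 2 μ)
    (hindep : Pairwise fun i j => IndepFun (X i) (X j) μ) (i j : ι) :
    ∫ ω, X i ω * X j ω ∂μ = μ[X i] * μ[X j] + if i = j then variance (X i) μ else 0 := by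
  split_ifs with h
  · subst h
    rw [variance_eq_sub (hX i)]
    simp [sq]
  · rw [(hindep h).integral_fun_mul_eq_mul_integral (hX i).aestronglyMeasurable
      (hX j).aestronglyMeasurable, add_zero]

variable [Fintype ι] {ε Y : Ω → ℝ} {c : ι → ℝ} {σ : ℝ}

theorem integrable_linearResponse_mul [IsFiniteMeasure μ] (hX : ∀ i, MemLp (X i) 2 μ)
    (hε : Integrable ε μ)
    (hεindep : ∀ i, IndepFun ε (X i) μ) (hY : ∀ ω, Y ω = ∑ i, c i * X i ω + σ * ε ω) (j : ι) :
    Integrable (fun ω => Y ω * X j ω) μ := by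
  simp_rw [hY, add_mul, Finset.sum_mul, mul_assoc]
  exact .add (integrable_finsetSum _ fun i _ => ((hX i).integrable_mul (hX j)).const_mul _)
    (((hεindep j).integrable_mul hε ((hX j).integrable one_le_two)).const_mul _)

theorem integral_linearResponse_mul [IsProbabilityMeasure μ] [DecidableEq ι]
    (hX : ∀ i, MemLp (X i) 2 μ)
    (hXindep : Pairwise fun i j => IndepFun (X i) (X j) μ) (hε : Integrable ε μ)
    (hε0 : μ[ε] = 0) (hεindep : ∀ i, IndepFun ε (X i) μ)
    (hY : ∀ ω, Y ω = ∑ i, c i * X i ω + σ * ε ω) (j : ι) :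
    ∫ ω, Y ω * X j ω ∂μ = (∑ i, c i * μ[X i]) * μ[X j] + c j * variance (X j) μ := by
  have hXX : ∀ i, Integrable (fun ω => c i * (X i ω * X j ω)) μ := fun i =>
    ((hX i).integrable_mul (hX j)).const_mul _
  have hεX : Integrable (fun ω => ε ω * X j ω) μ :=
    (hεindep j).integrable_mul hε ((hX j).integrable one_le_two)
  simp_rw [hY, add_mul, Finset.sum_mul, mul_assoc]
  rw [integral_add (integrable_finsetSum _ fun i _ => hXX i) (hεX.const_mul σ),
    integral_finsetSum _ fun i _ => hXX i, integral_const_mul,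
    (hεindep j).integral_fun_mul_eq_mul_integral hε.aestronglyMeasurable
      (hX j).aestronglyMeasurable, hε0]
  simp [integral_const_mul, integral_mul_eq_mul_add_ite_variance hX hXindep, mul_add,
    Finset.sum_add_distrib]

end LinearResponse

theorem expected_sigma_AY_general
    {Ω : Type*} [MeasurableSpace Ω] (μ : Measure Ω) [IsProbabilityMeasure μ]
    (N n K : ℕ)
    (z : Fin n → Fin K)
    (Z : Matrix (Fin n) (Fin K) ℝ)
    (hZ : ∀ u k, Z u k = if z u = k then 1 else 0)
    (R Ψ : Fin N → Matrix (Fin K) (Fin K) ℝ)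
    (hRsym : ∀ m, (R m).IsSymm) (hΨsym : ∀ m, (Ψ m).IsSymm)
    (C : Matrix (Fin K) (Fin K) ℝ) (hCsym : C.IsSymm)
    (B : Matrix (Fin n) (Fin n) ℝ) (hB : B = Z * C * Zᵀ)
    (σ : ℝ)
    (A : Fin N → Ω → Matrix (Fin n) (Fin n) ℝ)
    (ε : Fin N → Ω → ℝ)
    (Y : Fin N → Ω → ℝ)
    -- symmetry and zero diagonal of the adjacency matrices
    (hAsym : ∀ m ω, (A m ω).IsSymm)
    (hAdiag : ∀ m ω u, A m ω u u = 0)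
    -- square integrability of the edge variables
    (hAL2 : ∀ m (u v : Fin n), MemLp (fun ω => A m ω u v) 2 μ)
    -- means and variances of the edge variables
    (hAmean : ∀ m (u v : Fin n), u < v → (∫ ω, A m ω u v ∂μ) = R m (z u) (z v))
    (hAvar : ∀ m (u v : Fin n), u < v →
      variance (fun ω => A m ω u v) μ = Ψ m (z u) (z v))
    -- noise variables: integrable and centered
    (hεint : ∀ m, Integrable (ε m) μ)
    (hεmean : ∀ m, (∫ ω, ε m ω ∂μ) = 0)
    -- joint independence of all edge variables and all noise variables
    (hIndep : iIndepFun
      (Sum.elim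
        (fun q : (Fin N × {p : Fin n × Fin n // p.1 < p.2}) =>
          fun ω => A q.1 ω q.2.1.1 q.2.1.2)
        (fun m => ε m)) μ)
    -- the linear response model
    (hY : ∀ m ω, Y m ω = Matrix.trace (Bᵀ * A m ω) + σ * ε m ω)
    -- the matrix F
    (F : Matrix (Fin K) (Fin K) ℝ)
    (hF : ∀ j k, F j k = 2 * ((1 / (N : ℝ)) * ∑ m, Ψ m j k) * C j k
      + 2 * ∑ p ∈ Finset.univ.filter (fun p : Fin n × Fin n => p.1 < p.2),
          ((1 / (N : ℝ)) * ∑ m, R m j k * R m (z p.1) (z p.2)) * C (z p.1) (z p.2)) :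
    Matrix.of (fun u v => ∫ ω, (1 / (N : ℝ)) * ∑ m, Y m ω * A m ω u v ∂μ)
      = Z * F * Zᵀ - Matrix.diagonal (fun u => (Z * F * Zᵀ) u u) := by
  have hZG : ∀ G : Matrix (Fin K) (Fin K) ℝ, Z * G * Zᵀ = G.submatrix z z :=
    mul_mul_transpose_eq_submatrix hZ
  have hFsymm : F.IsSymm := IsSymm.ext fun j k => by
    simp only [hF, (hΨsym _).apply j k, (hRsym _).apply j k, hCsym.apply j k]
  have hlin : ∀ m ω, Y m ω = ∑ p : {p : Fin n × Fin n // p.1 < p.2},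
      2 * C (z p.1.1) (z p.1.2) * A m ω p.1.1 p.1.2 + σ * ε m ω := fun m ω => by
    rw [hY, trace_transpose_mul_eq_two_mul_sum_lt (hB ▸ hZG C ▸ hCsym.submatrix z) (hAsym m ω)
      (hAdiag m ω), Finset.mul_sum]
    simp [hB, hZG, mul_assoc]
  have hXindep : ∀ m, Pairwise fun p q : {p : Fin n × Fin n // p.1 < p.2} =>
      IndepFun (fun ω => A m ω p.1.1 p.1.2) (fun ω => A m ω q.1.1 q.1.2) μ :=
    fun m p q hpq => hIndep.indepFun (i := .inl (m, p)) (j := .inl (m, q)) (by simpa using hpq)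
  have hεindep : ∀ m (p : {p : Fin n × Fin n // p.1 < p.2}),
      IndepFun (ε m) (fun ω => A m ω p.1.1 p.1.2) μ :=
    fun m p => hIndep.indepFun (i := .inr m) (j := .inl (m, p)) Sum.inr_ne_inl
  refine (IsSymm.ext fun u v => ?_).eq_sub_diagonal_of_forall_lt (hZG F ▸ hFsymm.submatrix z)
    (fun u => by simp [hAdiag]) fun u v huv => ?_
  · simp only [of_apply, (hAsym _ _).apply u v]
  · rw [of_apply, integral_const_mul, integral_finsetSum _ fun m _ =>
        integrable_linearResponse_mul (fun p => hAL2 m _ _) (hεint m) (hεindep m) (hlin m)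
          ⟨(u, v), huv⟩,
      Finset.sum_congr rfl fun m _ => integral_linearResponse_mul (fun p => hAL2 m _ _)
        (hXindep m) (hεint m) (hεmean m) (hεindep m) (hlin m) ⟨(u, v), huv⟩]
    simp only [fun m (p : {p : Fin n × Fin n // p.1 < p.2}) => hAmean m _ _ p.2,
      hAmean _ _ _ huv, hAvar _ _ _ huv, hZG, submatrix_apply]
    exact mean_over_samples_eq hF _ _

/-- **Proposition 1** (expected value of the marginal covariance matrix).
Under a weighted stochastic block model sample with common communities and a linear
response model with block-constant coefficients, the expectation of
`Σ̂^{A,Y} = (1/N) ∑ₘ Yₘ A⁽ᵐ⁾` equals `Z F Zᵀ - diag(Z F Zᵀ)`. -/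
theorem expected_sigma_AY
    {Ω : Type*} [MeasurableSpace Ω] (μ : Measure Ω) [IsProbabilityMeasure μ]
    (N n K : ℕ) (hN : 1 ≤ N) (hn : 2 ≤ n) (hK : 1 ≤ K)
    (z : Fin n → Fin K)
    (Z : Matrix (Fin n) (Fin K) ℝ)
    (hZ : ∀ u k, Z u k = if z u = k then 1 else 0)
    (R Ψ : Fin N → Matrix (Fin K) (Fin K) ℝ)
    (hRsym : ∀ m, (R m).IsSymm) (hΨsym : ∀ m, (Ψ m).IsSymm)
    (C : Matrix (Fin K) (Fin K) ℝ) (hCsym : C.IsSymm)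
    (B : Matrix (Fin n) (Fin n) ℝ) (hB : B = Z * C * Zᵀ)
    (σ : ℝ) (hσ : 0 < σ)
    (A : Fin N → Ω → Matrix (Fin n) (Fin n) ℝ)
    (ε : Fin N → Ω → ℝ)
    (Y : Fin N → Ω → ℝ)
    -- symmetry and zero diagonal of the adjacency matrices
    (hAsym : ∀ m ω, (A m ω).IsSymm)
    (hAdiag : ∀ m ω u, A m ω u u = 0)
    -- square integrability of the edge variables
    (hAL2 : ∀ m (u v : Fin n), MemLp (fun ω => A m ω u v) 2 μ)
    -- means and variances of the edge variables
    (hAmean : ∀ m (u v : Fin n), u < v → (∫ ω, A m ω u v ∂μ) = R m (z u) (z v))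
    (hAvar : ∀ m (u v : Fin n), u < v →
      variance (fun ω => A m ω u v) μ = Ψ m (z u) (z v))
    -- noise variables: integrable and centered
    (hεint : ∀ m, Integrable (ε m) μ)
    (hεmean : ∀ m, (∫ ω, ε m ω ∂μ) = 0)
    -- joint independence of all edge variables and all noise variables
    (hIndep : iIndepFun
      (Sum.elim
        (fun q : (Fin N × {p : Fin n × Fin n // p.1 < p.2}) =>
          fun ω => A q.1 ω q.2.1.1 q.2.1.2)
        (fun m => ε m)) μ)
    -- the linear response model
    (hY : ∀ m ω, Y m ω = Matrix.trace (Bᵀ * A m ω) + σ * ε m ω)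
    -- the matrix F
    (F : Matrix (Fin K) (Fin K) ℝ)
    (hF : ∀ j k, F j k = 2 * ((1 / (N : ℝ)) * ∑ m, Ψ m j k) * C j k
      + 2 * ∑ p ∈ Finset.univ.filter (fun p : Fin n × Fin n => p.1 < p.2),
          ((1 / (N : ℝ)) * ∑ m, R m j k * R m (z p.1) (z p.2)) * C (z p.1) (z p.2)) :
    Matrix.of (fun u v => ∫ ω, (1 / (N : ℝ)) * ∑ m, Y m ω * A m ω u v ∂μ)
      = Z * F * Zᵀ - Matrix.diagonal (fun u => (Z * F * Zᵀ) u u) :=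
  expected_sigma_AY_general μ N n K z Z hZ R Ψ hRsym hΨsym C hCsym B hB σ A ε Y hAsym hAdiag hAL2
    hAmean hAvar hεint hεmean hIndep hY F hF
end

section
/- The symmetric matrix J satisfies the identity 2J = Θ (Π ∘ C′) Θ − D, where Θ = diag(n_1,…,n_K), D is the diagonal matrix with D_{jj} = n_j Π_{jj} C′_{jj}, and ∘ is the Hadamard product; consequently every eigenvalue μ of J satisfies 2|μ| ≥ n_min² · min_{1≤i≤K} |λ_i(Π ∘ C′)| − n_max · max_{1≤j≤K} |Π_{jj} C′_{jj}|, where λ_1(·),…,λ_K(·) denote the eigenvalues of a symmetric K×K matrix. -/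
/-!
Counting the pairs `s < t` with `{z s, z t} = {j, k}` through ordered pairs gives
`2 #pairs = (1 + [j ≠ k]) n_j n_k - [j = k] n_j`, which is the identity `2J = Θ (Π ∘ C′) Θ - D`
entry by entry. For the bound, an eigenvector `x` of `J` for `μ` satisfies
`Θ (Π ∘ C′) Θ x = 2μ x + D x`. Scaling by `Θ` multiplies Euclidean norms by at least `n_min`, and
`Π ∘ C′` by at least `minᵢ |λᵢ|` (read off in an orthonormal eigenbasis), so the left side has
norm at least `n_min² minᵢ |λᵢ| ‖x‖`, while the right side has norm at most
`(2|μ| + n_max maxⱼ |Π_jj C′_jj|) ‖x‖`.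
-/

open Matrix Finset

section PairCount

variable {ι κ : Type*} [Fintype ι] [LinearOrder ι]

theorem two_mul_card_filter_lt_of_symmetric (r : ι → ι → Prop) [DecidableRel r]
    (hr : ∀ s t, r s t → r t s) :
    2 * #{p : ι × ι | p.1 < p.2 ∧ r p.1 p.2} = #{p : ι × ι | p.1 ≠ p.2 ∧ r p.1 p.2} := by
  have hswap : #{p : ι × ι | p.2 < p.1 ∧ r p.1 p.2} = #{p : ι × ι | p.1 < p.2 ∧ r p.1 p.2} :=
    card_nbij' Prod.swap Prod.swap (by simp +contextual [Set.MapsTo, hr _])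
      (by simp +contextual [Set.MapsTo, hr _]) (by simp [Set.LeftInvOn])
      (by simp [Set.LeftInvOn])
  rw [two_mul]
  nth_rw 2 [← hswap]
  rw [← card_union_of_disjoint]
  · congr 1
    ext p
    simp only [mem_union, mem_filter, mem_univ, true_and, ne_iff_lt_or_gt]
    tauto
  · rw [disjoint_filter]
    exact fun p _ h h' => lt_asymm h.1 h'.1

variable [DecidableEq κ] (z : ι → κ)

def pairCount (j k : κ) : ℕ :=
  #{p : ι × ι | p.1 < p.2 ∧ (z p.1 = j ∧ z p.2 = k ∨ z p.1 = k ∧ z p.2 = j)}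

theorem pairCount_of_ne {j k : κ} (hjk : j ≠ k) :
    pairCount z j k = #{u | z u = j} * #{u | z u = k} := by
  apply Nat.eq_of_mul_eq_mul_left two_pos
  rw [pairCount, two_mul_card_filter_lt_of_symmetric
    (fun s t => z s = j ∧ z t = k ∨ z s = k ∧ z t = j) (fun s t => by tauto)]
  set A : Finset ι := {u | z u = j}
  set B : Finset ι := {u | z u = k}
  have hsplit : ({p : ι × ι | p.1 ≠ p.2 ∧ (z p.1 = j ∧ z p.2 = k ∨ z p.1 = k ∧ z p.2 = j)} :
      Finset _) = (A ×ˢ B).disjUnion (B ×ˢ A) (by simp +contextual [A, B, disjoint_left, hjk]) := by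
    ext ⟨s, t⟩
    simp only [A, B, mem_filter, mem_univ, true_and, mem_disjUnion, mem_product]
    grind
  rw [hsplit, card_disjUnion, card_product, card_product]
  ring

theorem two_mul_pairCount_self_add (j : κ) :
    2 * pairCount z j j + #{u | z u = j} = #{u | z u = j} * #{u | z u = j} := by
  rw [pairCount, two_mul_card_filter_lt_of_symmetric
    (fun s t => z s = j ∧ z t = j ∨ z s = j ∧ z t = j) (fun s t => by tauto)]
  have hoff : ({p : ι × ι | p.1 ≠ p.2 ∧ (z p.1 = j ∧ z p.2 = j ∨ z p.1 = j ∧ z p.2 = j)} :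
      Finset _) = ({u | z u = j} : Finset ι).offDiag := by
    ext ⟨s, t⟩
    simp only [mem_filter, mem_univ, true_and, mem_offDiag, or_self]
    tauto
  rw [hoff, offDiag_card]
  have := Nat.le_mul_self #{u | z u = j}
  omega

theorem two_smul_eq_diagonal_mul_hadamard_mul_diagonal_sub [Fintype κ]
    {Pim C C' J : Matrix κ κ ℝ} (hC' : ∀ j k, C' j k = (if j ≠ k then 2 else 1) * C j k)
    (hJ : ∀ j k, J j k = Pim j k * C j k * pairCount z j k) :
    (2 : ℝ) • J = diagonal (fun k => (#{u | z u = k} : ℝ)) * (Pim ⊙ C') *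
        diagonal (fun k => (#{u | z u = k} : ℝ)) -
      diagonal (fun j => (#{u | z u = j} : ℝ) * Pim j j * C' j j) := by
  ext j k
  rw [Matrix.sub_apply, Matrix.smul_apply, mul_diagonal, diagonal_mul, hadamard_apply,
    diagonal_apply, hJ, hC', smul_eq_mul]
  by_cases hjk : j = k
  · subst hjk
    have hcount : 2 * (pairCount z j j : ℝ) + #{u | z u = j} =
        #{u | z u = j} * #{u | z u = j} := by
      exact_mod_cast two_mul_pairCount_self_add z j
    simp only [ne_eq, not_true_eq_false, if_false, if_true, hC']
    linear_combination (Pim j j * C j j) * hcount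
  · simp only [ne_eq, hjk, not_false_eq_true, if_true, if_false, pairCount_of_ne z hjk]
    push_cast
    ring

end PairCount

namespace EuclideanSpace

variable {𝕜 ι : Type*} [RCLike 𝕜] [Fintype ι]

theorem norm_le_norm_of_forall_norm_le {x y : EuclideanSpace 𝕜 ι} (h : ∀ i, ‖x i‖ ≤ ‖y i‖) :
    ‖x‖ ≤ ‖y‖ := by
  rw [EuclideanSpace.norm_eq, EuclideanSpace.norm_eq]
  gcongr with i
  exact h i

theorem mul_norm_le_norm_of_forall {c : ℝ} (hc : 0 ≤ c) {x y : EuclideanSpace 𝕜 ι}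
    (h : ∀ i, c * ‖x i‖ ≤ ‖y i‖) : c * ‖x‖ ≤ ‖y‖ := by
  have := norm_le_norm_of_forall_norm_le (x := (c : 𝕜) • x) (y := y)
    (fun i => by simpa [norm_smul, abs_of_nonneg hc] using h i)
  simpa [norm_smul, abs_of_nonneg hc] using this

theorem norm_le_mul_norm_of_forall {c : ℝ} (hc : 0 ≤ c) {x y : EuclideanSpace 𝕜 ι}
    (h : ∀ i, ‖y i‖ ≤ c * ‖x i‖) : ‖y‖ ≤ c * ‖x‖ := by
  have := norm_le_norm_of_forall_norm_le (x := y) (y := (c : 𝕜) • x)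
    (fun i => by simpa [norm_smul, abs_of_nonneg hc] using h i)
  simpa [norm_smul, abs_of_nonneg hc] using this

end EuclideanSpace

section Spectral

variable {𝕜 ι : Type*} [RCLike 𝕜] [Fintype ι] [DecidableEq ι]

theorem Matrix.mul_norm_le_norm_toEuclideanLin_diagonal {d : ι → 𝕜} {c : ℝ} (hc : 0 ≤ c)
    (hd : ∀ i, c ≤ ‖d i‖) (x : EuclideanSpace 𝕜 ι) :
    c * ‖x‖ ≤ ‖toEuclideanLin (diagonal d) x‖ :=
  EuclideanSpace.mul_norm_le_norm_of_forall hc fun i => by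
    simpa [toLpLin_apply, mulVec_diagonal, norm_mul] using
      mul_le_mul_of_nonneg_right (hd i) (norm_nonneg (x i))

theorem Matrix.norm_toEuclideanLin_diagonal_le {d : ι → 𝕜} {c : ℝ} (hc : 0 ≤ c)
    (hd : ∀ i, ‖d i‖ ≤ c) (x : EuclideanSpace 𝕜 ι) :
    ‖toEuclideanLin (diagonal d) x‖ ≤ c * ‖x‖ :=
  EuclideanSpace.norm_le_mul_norm_of_forall hc fun i => by
    simpa [toLpLin_apply, mulVec_diagonal, norm_mul] using
      mul_le_mul_of_nonneg_right (hd i) (norm_nonneg (x i))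

theorem Matrix.IsHermitian.eigenvectorBasis_repr_toEuclideanLin {A : Matrix ι ι 𝕜}
    (hA : A.IsHermitian) (x : EuclideanSpace 𝕜 ι) (i : ι) :
    hA.eigenvectorBasis.repr (toEuclideanLin A x) i =
      hA.eigenvalues i * hA.eigenvectorBasis.repr x i := by
  have hT := isSymmetric_toEuclideanLin_iff.mpr hA
  have hb : toEuclideanLin A (hA.eigenvectorBasis i) =
      hA.eigenvalues i • hA.eigenvectorBasis i := by
    ext1
    simp [toLpLin_apply, hA.mulVec_eigenvectorBasis]
  rw [OrthonormalBasis.repr_apply_apply, OrthonormalBasis.repr_apply_apply, ← hT, hb,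
    RCLike.real_smul_eq_coe_smul (K := 𝕜), inner_smul_left, RCLike.conj_ofReal]

theorem Matrix.IsHermitian.mul_norm_le_norm_toEuclideanLin {A : Matrix ι ι 𝕜}
    (hA : A.IsHermitian) {c : ℝ} (hc : 0 ≤ c) (hcA : ∀ i, c ≤ |hA.eigenvalues i|)
    (x : EuclideanSpace 𝕜 ι) :
    c * ‖x‖ ≤ ‖toEuclideanLin A x‖ := by
  rw [← hA.eigenvectorBasis.repr.norm_map (toEuclideanLin A x),
    ← hA.eigenvectorBasis.repr.norm_map x]
  refine EuclideanSpace.mul_norm_le_norm_of_forall hc fun i => ?_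
  rw [hA.eigenvectorBasis_repr_toEuclideanLin, norm_mul, RCLike.norm_ofReal]
  exact mul_le_mul_of_nonneg_right (hcA i) (norm_nonneg _)

end Spectral

section EigenvalueBound

variable {ι : Type*} [Fintype ι] [DecidableEq ι]

theorem sq_mul_sub_le_two_mul_abs_of_mem_spectrum {J M : Matrix ι ι ℝ} {θ d : ι → ℝ}
    {a b c μ : ℝ} (hJ : (2 : ℝ) • J = diagonal θ * M * diagonal θ - diagonal d)
    (hM : M.IsHermitian) (ha : 0 ≤ a) (hθ : ∀ i, a ≤ |θ i|) (hb : 0 ≤ b)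
    (hbM : ∀ i, b ≤ |hM.eigenvalues i|) (hc : 0 ≤ c) (hd : ∀ i, |d i| ≤ c)
    (hμ : μ ∈ spectrum ℝ J) :
    a ^ 2 * b - c ≤ 2 * |μ| := by
  rw [← spectrum_toLpLin 2, ← Module.End.hasEigenvalue_iff_mem_spectrum] at hμ
  obtain ⟨x, hx⟩ := hμ.exists_hasEigenvector
  have hsplit : toEuclideanLin (diagonal θ * M * diagonal θ) x =
      (2 * μ) • x + toEuclideanLin (diagonal d) x := by
    rw [sub_eq_iff_eq_add.mp hJ.symm, map_add, map_smul, LinearMap.add_apply,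
      LinearMap.smul_apply, hx.apply_eq_smul, smul_smul]
  have hlower : a ^ 2 * b * ‖x‖ ≤ ‖toEuclideanLin (diagonal θ * M * diagonal θ) x‖ := by
    simp only [toLpLin_mul_same, LinearMap.comp_apply]
    calc a ^ 2 * b * ‖x‖ = a * (b * (a * ‖x‖)) := by ring
      _ ≤ a * (b * ‖toEuclideanLin (diagonal θ) x‖) := by
        gcongr; exact mul_norm_le_norm_toEuclideanLin_diagonal ha hθ x
      _ ≤ a * ‖toEuclideanLin M (toEuclideanLin (diagonal θ) x)‖ := by
        gcongr; exact hM.mul_norm_le_norm_toEuclideanLin hb hbM _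
      _ ≤ _ := mul_norm_le_norm_toEuclideanLin_diagonal ha hθ _
  have hupper : ‖toEuclideanLin (diagonal θ * M * diagonal θ) x‖ ≤ (2 * |μ| + c) * ‖x‖ := by
    rw [hsplit, add_mul]
    refine (norm_add_le _ _).trans (add_le_add ?_ (norm_toEuclideanLin_diagonal_le hc hd x))
    rw [norm_smul, Real.norm_eq_abs, abs_mul, abs_two]
  refine le_of_mul_le_mul_right ?_ (norm_pos_iff.mpr hx.2)
  linarith [hlower.trans hupper]

end EigenvalueBound

theorem J_identity_and_eigenvalue_bound_general
    (n K : ℕ) (hK : 0 < K)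
    (z : Fin n → Fin K)
    (nsize : Fin K → ℕ)
    (hnsize : ∀ k, nsize k = (Finset.univ.filter (fun u : Fin n => z u = k)).card)
    (C : Matrix (Fin K) (Fin K) ℝ)
    (Pim : Matrix (Fin K) (Fin K) ℝ)
    (C' : Matrix (Fin K) (Fin K) ℝ)
    (hC' : ∀ j k, C' j k = (if j ≠ k then 2 else 1) * C j k)
    (J : Matrix (Fin K) (Fin K) ℝ)
    (hJ : ∀ j k, J j k = Pim j k * C j k *
      ((Finset.univ.filter (fun p : Fin n × Fin n => p.1 < p.2 ∧
        ((z p.1 = j ∧ z p.2 = k) ∨ (z p.1 = k ∧ z p.2 = j)))).card : ℝ))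
    (Θ D : Matrix (Fin K) (Fin K) ℝ)
    (hΘ : Θ = Matrix.diagonal (fun k => (nsize k : ℝ)))
    (hD : D = Matrix.diagonal (fun j => (nsize j : ℝ) * Pim j j * C' j j)) :
    (2 : ℝ) • J = Θ * (Pim ⊙ C') * Θ - D ∧
    ∀ (hPC : (Pim ⊙ C').IsHermitian) (μ : ℝ), μ ∈ spectrum ℝ J →
      2 * |μ| ≥
        ((Finset.univ.inf' ⟨⟨0, hK⟩, Finset.mem_univ _⟩ nsize : ℕ) : ℝ) ^ 2 *
          Finset.univ.inf' ⟨⟨0, hK⟩, Finset.mem_univ _⟩ (fun i => |hPC.eigenvalues i|)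
        - ((Finset.univ.sup' ⟨⟨0, hK⟩, Finset.mem_univ _⟩ nsize : ℕ) : ℝ) *
          Finset.univ.sup' ⟨⟨0, hK⟩, Finset.mem_univ _⟩ (fun j => |Pim j j * C' j j|) := by
  obtain rfl : nsize = fun k => #{u | z u = k} := funext hnsize
  subst hΘ hD
  have hid := two_smul_eq_diagonal_mul_hadamard_mul_diagonal_sub z hC' hJ
  refine ⟨hid, fun hPC μ hμ => sq_mul_sub_le_two_mul_abs_of_mem_spectrum hid hPC (by positivity)
    (fun i => ?_) (le_inf' _ _ fun i _ => abs_nonneg _) (fun i => inf'_le _ (mem_univ i))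
    (mul_nonneg (by positivity) (le_sup'_of_le _ (mem_univ ⟨0, hK⟩) (abs_nonneg _)))
    (fun j => ?_) hμ⟩
  · rw [Nat.abs_cast]
    exact_mod_cast inf'_le _ (mem_univ i)
  · rw [mul_assoc, abs_mul, Nat.abs_cast]
    exact mul_le_mul (by exact_mod_cast le_sup' (fun k => #{u | z u = k}) (mem_univ j))
      (le_sup' (fun j => |Pim j j * C' j j|) (mem_univ j)) (abs_nonneg _) (Nat.cast_nonneg _)

/-- The matrix `J` satisfies `2J = Θ (Π ∘ C′) Θ − D`, and consequently every eigenvalue `μ`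
of `J` satisfies `2|μ| ≥ n_min² · minᵢ |λᵢ(Π ∘ C′)| − n_max · maxⱼ |Π_jj C′_jj|`. -/
theorem J_identity_and_eigenvalue_bound
    (N n K : ℕ) (hN : 1 ≤ N) (hn : 2 ≤ n) (hK : 0 < K)
    (z : Fin n → Fin K)
    (nsize : Fin K → ℕ)
    (hnsize : ∀ k, nsize k = (Finset.univ.filter (fun u : Fin n => z u = k)).card)
    (hpos : ∀ k, 0 < nsize k)
    (R : Fin N → Matrix (Fin K) (Fin K) ℝ)
    (hRsym : ∀ m, (R m).IsSymm)
    (C : Matrix (Fin K) (Fin K) ℝ) (hCsym : C.IsSymm)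
    (Pim : Matrix (Fin K) (Fin K) ℝ)
    (hPim : ∀ j k, Pim j k = (1 / (N : ℝ)) * ∑ m, (R m j k) ^ 2)
    (C' : Matrix (Fin K) (Fin K) ℝ)
    (hC' : ∀ j k, C' j k = (if j ≠ k then 2 else 1) * C j k)
    (J : Matrix (Fin K) (Fin K) ℝ)
    (hJ : ∀ j k, J j k = Pim j k * C j k *
      ((Finset.univ.filter (fun p : Fin n × Fin n => p.1 < p.2 ∧
        ((z p.1 = j ∧ z p.2 = k) ∨ (z p.1 = k ∧ z p.2 = j)))).card : ℝ))
    (Θ D : Matrix (Fin K) (Fin K) ℝ)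
    (hΘ : Θ = Matrix.diagonal (fun k => (nsize k : ℝ)))
    (hD : D = Matrix.diagonal (fun j => (nsize j : ℝ) * Pim j j * C' j j)) :
    (2 : ℝ) • J = Θ * (Pim ⊙ C') * Θ - D ∧
    ∀ (hPC : (Pim ⊙ C').IsHermitian) (μ : ℝ), μ ∈ spectrum ℝ J →
      2 * |μ| ≥
        ((Finset.univ.inf' ⟨⟨0, hK⟩, Finset.mem_univ _⟩ nsize : ℕ) : ℝ) ^ 2 *
          Finset.univ.inf' ⟨⟨0, hK⟩, Finset.mem_univ _⟩ (fun i => |hPC.eigenvalues i|)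
        - ((Finset.univ.sup' ⟨⟨0, hK⟩, Finset.mem_univ _⟩ nsize : ℕ) : ℝ) *
          Finset.univ.sup' ⟨⟨0, hK⟩, Finset.mem_univ _⟩ (fun j => |Pim j j * C' j j|) :=
  J_identity_and_eigenvalue_bound_general n K hK z nsize hnsize C Pim C' hC' J hJ Θ D hΘ hD
end

section
/- (Nonasymptotic form of Proposition 2.) Suppose n_min ≥ 2, let γ := min_{1≤i≤K}|λ_i(Π ∘ C′)| > 0, and suppose there exists δ ∈ (0,1] such that |H_{jk}| ≤ (1−δ)(n_min²/K) γ for all 1 ≤ j,k ≤ K, where H_{jk} = ∑_{(s,t)∈P, {z_s,z_t}≠{j,k}} ((1/N)∑_{m=1}^N R^{(m)}_{jk} R^{(m)}_{z_s z_t}) C_{z_s z_t}. Then the smallest absolute eigenvalue of F satisfies min_{1≤i≤K}|λ_i(F)| ≥ (2δ−1) n_min² γ − n_max · max_{1≤j≤K}|Π_{jj} C′_{jj}| − 2‖Ψ ∘ C‖, where ‖·‖ is the spectral (operator) norm. -/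
open Matrix BigOperators
open scoped Matrix.Norms.L2Operator

/-!
Counting the pairs `s < t` whose labels are `{j, k}` (`n_j n_k` of them if `j ≠ k`,
`n_j (n_j - 1) / 2` if `j = k`) splits `F = D (Π ∘ C′) D + 2 Ψ ∘ C - E + 2 H` with
`D = diag (n_k)` and `E = diag (n_k Π_kk C′_kk)`. Since `D` stretches every vector by at least
`n_min` and `Π ∘ C′` by at least `γ`, the first term stretches every vector by at least
`n_min² γ`, while the rest has operator norm at most
`2 ‖Ψ ∘ C‖ + n_max maxⱼ |Π_jj C′_jj| + 2 K · (1 - δ) n_min² γ / K`.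
Testing `F` on a unit eigenvector gives the bound.
-/

namespace Matrix

variable {𝕜 n : Type*} [RCLike 𝕜] [Fintype n] [DecidableEq n]

theorem mul_norm_le_norm_toEuclideanCLM_diagonal {d : n → 𝕜} {c : ℝ} (h : ∀ i, c ≤ ‖d i‖)
    (x : EuclideanSpace 𝕜 n) : c * ‖x‖ ≤ ‖toEuclideanCLM (𝕜 := 𝕜) (diagonal d) x‖ := by
  rcases lt_or_ge c 0 with hc | hc
  · exact (mul_nonpos_of_nonpos_of_nonneg hc.le (norm_nonneg x)).trans (norm_nonneg _)
  refine (sq_le_sq₀ (by positivity) (norm_nonneg _)).mp ?_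
  simp only [mul_pow, EuclideanSpace.norm_sq_eq, ofLp_toEuclideanCLM, mulVec_diagonal, norm_mul,
    Finset.mul_sum]
  gcongr with i
  exact h i

theorem IsHermitian.mul_norm_le_norm_toEuclideanCLM {A : Matrix n n 𝕜} (hA : A.IsHermitian)
    {c : ℝ} (h : ∀ i, c ≤ |hA.eigenvalues i|) (x : EuclideanSpace 𝕜 n) :
    c * ‖x‖ ≤ ‖toEuclideanCLM (𝕜 := 𝕜) A x‖ := by
  set U := toEuclideanCLM (𝕜 := 𝕜) (hA.eigenvectorUnitary : Matrix n n 𝕜)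
  have hU : U ∈ unitary _ := Unitary.map_mem _ hA.eigenvectorUnitary.2
  have hU' : star U ∈ unitary _ := Unitary.star_mem hU
  have hd : ∀ i, c ≤ ‖((hA.eigenvalues i : ℝ) : 𝕜)‖ := by simpa using h
  conv_rhs => rw [hA.spectral_theorem, Unitary.conjStarAlgAut_apply, map_mul, map_mul, map_star]
  rw [mul_apply_eq_comp, mul_apply_eq_comp, ContinuousLinearMap.norm_map_of_mem_unitary hU,
    ← ContinuousLinearMap.norm_map_of_mem_unitary hU' x]
  exact mul_norm_le_norm_toEuclideanCLM_diagonal hd _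

theorem mul_norm_le_norm_toEuclideanCLM_diagonal_mul_mul_diagonal {d : n → 𝕜}
    {B : Matrix n n 𝕜} (hB : B.IsHermitian) {a b : ℝ} (ha : 0 ≤ a) (hb : 0 ≤ b)
    (hd : ∀ i, a ≤ ‖d i‖) (hBb : ∀ i, b ≤ |hB.eigenvalues i|) (x : EuclideanSpace 𝕜 n) :
    a ^ 2 * b * ‖x‖ ≤ ‖toEuclideanCLM (𝕜 := 𝕜) (diagonal d * B * diagonal d) x‖ := by
  set T := toEuclideanCLM (𝕜 := 𝕜) (diagonal d)
  rw [map_mul, map_mul, mul_apply_eq_comp, mul_apply_eq_comp]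
  calc a ^ 2 * b * ‖x‖ = a * (b * (a * ‖x‖)) := by ring
    _ ≤ a * (b * ‖T x‖) := by grw [mul_norm_le_norm_toEuclideanCLM_diagonal hd x]
    _ ≤ a * ‖toEuclideanCLM (𝕜 := 𝕜) B (T x)‖ := by
        grw [hB.mul_norm_le_norm_toEuclideanCLM hBb (T x)]
    _ ≤ _ := mul_norm_le_norm_toEuclideanCLM_diagonal hd _

theorem IsHermitian.sub_l2_opNorm_sub_le_abs_eigenvalues {F A : Matrix n n 𝕜}
    (hF : F.IsHermitian) {a : ℝ} (hA : ∀ x, a * ‖x‖ ≤ ‖toEuclideanCLM (𝕜 := 𝕜) A x‖) (i : n) :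
    a - ‖F - A‖ ≤ |hF.eigenvalues i| := by
  set v := hF.eigenvectorBasis i
  have hv : ‖v‖ = 1 := hF.eigenvectorBasis.orthonormal.1 i
  have hFv : toEuclideanCLM (𝕜 := 𝕜) F v = hF.eigenvalues i • v := by
    apply WithLp.ofLp_injective
    rw [ofLp_toEuclideanCLM, hF.mulVec_eigenvectorBasis, WithLp.ofLp_smul]
  have hAv : toEuclideanCLM (𝕜 := 𝕜) A v
      = toEuclideanCLM (𝕜 := 𝕜) F v - toEuclideanCLM (𝕜 := 𝕜) (F - A) v := by
    simp
  have hWv : ‖toEuclideanCLM (𝕜 := 𝕜) (F - A) v‖ ≤ ‖F - A‖ := by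
    refine ((toEuclideanCLM (𝕜 := 𝕜) (F - A)).le_opNorm v).trans_eq ?_
    rw [hv, mul_one, l2_opNorm_toEuclideanCLM]
  have := hA v
  rw [hAv, hFv, hv, mul_one] at this
  have h2 := norm_sub_le (hF.eigenvalues i • v) (toEuclideanCLM (𝕜 := 𝕜) (F - A) v)
  rw [norm_smul, hv, mul_one, Real.norm_eq_abs] at h2
  linarith

theorem l2_opNorm_le_card_mul {A : Matrix n n 𝕜} {c : ℝ} (h : ∀ i j, ‖A i j‖ ≤ c) :
    ‖A‖ ≤ Fintype.card n * c := by
  rcases isEmpty_or_nonempty n with hn | ⟨⟨i₀⟩⟩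
  · simp [Subsingleton.elim A 0]
  have hc : 0 ≤ c := (norm_nonneg _).trans (h i₀ i₀)
  rw [← l2_opNorm_toEuclideanCLM]
  refine ContinuousLinearMap.opNorm_le_bound _ (by positivity) fun x => ?_
  have hrow : ∀ i, ‖(A *ᵥ x.ofLp) i‖ ^ 2 ≤ Fintype.card n * c ^ 2 * ‖x‖ ^ 2 := by
    intro i
    calc ‖(A *ᵥ x.ofLp) i‖ ^ 2 ≤ (∑ j, c * ‖x j‖) ^ 2 := by
          gcongr
          refine (norm_sum_le _ _).trans (Finset.sum_le_sum fun j _ => ?_)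
          rw [norm_mul]
          gcongr
          exact h i j
      _ = c ^ 2 * (∑ j, ‖x j‖) ^ 2 := by rw [← Finset.mul_sum, mul_pow]
      _ ≤ c ^ 2 * (Fintype.card n * ∑ j, ‖x j‖ ^ 2) := by
          gcongr
          exact sq_sum_le_card_mul_sum_sq
      _ = Fintype.card n * c ^ 2 * ‖x‖ ^ 2 := by rw [EuclideanSpace.norm_sq_eq]; ring
  refine (sq_le_sq₀ (norm_nonneg _) (by positivity)).mp ?_
  calc ‖toEuclideanCLM (𝕜 := 𝕜) A x‖ ^ 2 ≤ ∑ _i : n, Fintype.card n * c ^ 2 * ‖x‖ ^ 2 := by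
        rw [EuclideanSpace.norm_sq_eq]
        exact Finset.sum_le_sum fun i _ => hrow i
    _ = _ := by simp; ring

end Matrix

section LabelledPairs

open Finset

variable {α ι : Type*} [Fintype α] [LinearOrder α]

theorem two_mul_card_filter_lt_add_card_diag (Q : α → α → Prop) [DecidableRel Q]
    (hQ : ∀ a b, Q a b → Q b a) :
    2 * #{p : α × α | p.1 < p.2 ∧ Q p.1 p.2} + #{a | Q a a} = #{p : α × α | Q p.1 p.2} := by
  have hswap : #{p : α × α | p.2 < p.1 ∧ Q p.1 p.2} = #{p : α × α | p.1 < p.2 ∧ Q p.1 p.2} :=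
    card_equiv (Equiv.prodComm α α) fun p => by
      simpa using and_congr_right fun _ => ⟨hQ _ _, hQ _ _⟩
  have hdiag : #{p : α × α | p.1 = p.2 ∧ Q p.1 p.2} = #{a | Q a a} :=
    card_bij' (fun p _ => p.1) (fun a _ => (a, a)) (by simp +contextual) (by simp)
      (by simp +contextual [Prod.ext_iff]) (by simp)
  have htri : #{p : α × α | Q p.1 p.2} = #{p : α × α | p.1 < p.2 ∧ Q p.1 p.2}
      + #{p : α × α | p.1 = p.2 ∧ Q p.1 p.2} + #{p : α × α | p.2 < p.1 ∧ Q p.1 p.2} := by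
    simp only [card_filter, ← sum_add_distrib]
    refine sum_congr rfl fun p _ => ?_
    rcases lt_trichotomy p.1 p.2 with h | h | h
    · simp [h, h.ne, h.not_gt]
    · simp [h]
    · simp [h, h.ne', h.not_gt]
  omega

variable [DecidableEq ι]

theorem card_filter_labels_eq_pair (z : α → ι) (j k : ι) :
    #{p : α × α | z p.1 = j ∧ z p.2 = k ∨ z p.1 = k ∧ z p.2 = j}
      = (if j ≠ k then 2 else 1) * (#{u | z u = j} * #{u | z u = k}) := by
  have hprod (a b : ι) :
      #{p : α × α | z p.1 = a ∧ z p.2 = b} = #{u | z u = a} * #{u | z u = b} := by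
    rw [← card_product, ← filter_product, univ_product_univ]
  split_ifs with hjk
  · rw [filter_or, card_union_of_disjoint, hprod, hprod]
    · ring
    · simp only [disjoint_left, mem_filter, mem_univ, true_and]
      rintro p ⟨rfl, -⟩ ⟨h, -⟩
      exact hjk h
  · obtain rfl := not_not.mp hjk
    simp [hprod]

theorem two_mul_card_filter_lt_labels_eq_pair_add (z : α → ι) (j k : ι) :
    2 * #{p : α × α | p.1 < p.2 ∧ (z p.1 = j ∧ z p.2 = k ∨ z p.1 = k ∧ z p.2 = j)}
      + (if j = k then #{u | z u = j} else 0)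
      = (if j ≠ k then 2 else 1) * (#{u | z u = j} * #{u | z u = k}) := by
  rw [← card_filter_labels_eq_pair, ← two_mul_card_filter_lt_add_card_diag
    (fun s t => z s = j ∧ z t = k ∨ z s = k ∧ z t = j) fun s t h => h.symm.imp And.symm And.symm]
  congr 1
  split_ifs with hjk
  · subst hjk
    simp
  · rw [eq_comm, card_eq_zero, filter_eq_empty_iff]
    rintro a - (⟨h1, h2⟩ | ⟨h1, h2⟩) <;> exact hjk (h1 ▸ h2 ▸ rfl)

theorem two_mul_sum_filter_lt_add_eq_labels_eq_pair (z : α → ι) (g : ι → ι → ℝ)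
    (hg : ∀ a b, g a b = g b a) (j k : ι) :
    2 * ∑ p ∈ {p : α × α | p.1 < p.2}, g (z p.1) (z p.2)
        + (if j = k then (#{u | z u = j} : ℝ) else 0) * g j k
      = (if j ≠ k then 2 else 1) * ((#{u | z u = j} : ℝ) * #{u | z u = k}) * g j k
        + 2 * ∑ p ∈ {p : α × α | p.1 < p.2 ∧ ¬(z p.1 = j ∧ z p.2 = k ∨ z p.1 = k ∧ z p.2 = j)},
            g (z p.1) (z p.2) := by
  have hcard := congrArg (Nat.cast : ℕ → ℝ) (two_mul_card_filter_lt_labels_eq_pair_add z j k)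
  push_cast [Nat.cast_ite] at hcard
  have hconst : ∀ p ∈ ({p : α × α | p.1 < p.2 ∧ (z p.1 = j ∧ z p.2 = k ∨ z p.1 = k ∧ z p.2 = j)} :
      Finset (α × α)), g (z p.1) (z p.2) = g j k := by
    simp only [mem_filter, mem_univ, true_and]
    rintro p ⟨-, ⟨h1, h2⟩ | ⟨h1, h2⟩⟩
    · rw [h1, h2]
    · rw [h1, h2, hg]
  rw [← sum_filter_add_sum_filter_not _
    (fun p : α × α => z p.1 = j ∧ z p.2 = k ∨ z p.1 = k ∧ z p.2 = j), filter_filter,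
    filter_filter, sum_congr rfl hconst, sum_const, nsmul_eq_mul]
  linear_combination g j k * hcard

theorem eq_diagonal_mul_hadamard_mul_diagonal_add [Fintype ι] {N : ℕ} (z : α → ι)
    (R : Fin N → Matrix ι ι ℝ) (hRsym : ∀ m, (R m).IsSymm) (C : Matrix ι ι ℝ) (hCsym : C.IsSymm)
    {Pim Psibar C' F H : Matrix ι ι ℝ}
    (hPim : ∀ j k, Pim j k = (1 / (N : ℝ)) * ∑ m, (R m j k) ^ 2)
    (hC' : ∀ j k, C' j k = (if j ≠ k then 2 else 1) * C j k)
    (hF : ∀ j k, F j k = 2 * Psibar j k * C j k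
      + 2 * ∑ p ∈ {p : α × α | p.1 < p.2},
          ((1 / (N : ℝ)) * ∑ m, R m j k * R m (z p.1) (z p.2)) * C (z p.1) (z p.2))
    (hH : ∀ j k, H j k = ∑ p ∈ {p : α × α | p.1 < p.2 ∧
        ¬((z p.1 = j ∧ z p.2 = k) ∨ (z p.1 = k ∧ z p.2 = j))},
          ((1 / (N : ℝ)) * ∑ m, R m j k * R m (z p.1) (z p.2)) * C (z p.1) (z p.2)) :
    F = diagonal (fun j => (#{u | z u = j} : ℝ)) * (Pim ⊙ C') *
          diagonal (fun j => (#{u | z u = j} : ℝ))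
        + ((2 : ℝ) • (Psibar ⊙ C) - diagonal (fun j => #{u | z u = j} * (Pim j j * C' j j))
          + (2 : ℝ) • H) := by
  ext j k
  set g : ι → ι → ℝ := fun a b => ((1 / (N : ℝ)) * ∑ m, R m j k * R m a b) * C a b
  have hg : ∀ a b, g a b = g b a := fun a b => by
    simp only [g, (hRsym _).apply a b, hCsym.apply a b]
  have hgjk : g j k = Pim j k * C j k := by simp only [g, hPim, sq]
  have := two_mul_sum_filter_lt_add_eq_labels_eq_pair z g hg j k
  rw [hgjk] at this
  simp only [g] at this
  simp only [Matrix.add_apply, Matrix.sub_apply, Matrix.smul_apply, mul_diagonal, diagonal_mul,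
    hadamard_apply, diagonal_apply, hC', hF, hH]
  rcases eq_or_ne j k with rfl | hjk
  · simp only [if_true, ne_eq, not_true_eq_false, if_false] at this ⊢
    linear_combination this
  · simp only [hjk, if_false, ne_eq, not_false_eq_true, if_true] at this ⊢
    linear_combination this

end LabelledPairs

theorem smallest_eigenvalue_F_lower_bound_general
    (N n K : ℕ) (hK : 0 < K)
    (z : Fin n → Fin K)
    (nsize : Fin K → ℕ)
    (hnsize : ∀ k, nsize k = (Finset.univ.filter (fun u : Fin n => z u = k)).card)
    (nmin nmax : ℕ)
    (hnmin : nmin = Finset.univ.inf' ⟨⟨0, hK⟩, Finset.mem_univ _⟩ nsize)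
    (hnmax : nmax = Finset.univ.sup' ⟨⟨0, hK⟩, Finset.mem_univ _⟩ nsize)
    (R : Fin N → Matrix (Fin K) (Fin K) ℝ)
    (hRsym : ∀ m, (R m).IsSymm)
    (C : Matrix (Fin K) (Fin K) ℝ) (hCsym : C.IsSymm)
    (Pim Psibar : Matrix (Fin K) (Fin K) ℝ)
    (hPim : ∀ j k, Pim j k = (1 / (N : ℝ)) * ∑ m, (R m j k) ^ 2)
    (C' : Matrix (Fin K) (Fin K) ℝ)
    (hC' : ∀ j k, C' j k = (if j ≠ k then 2 else 1) * C j k)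
    (F : Matrix (Fin K) (Fin K) ℝ)
    (hF : ∀ j k, F j k = 2 * Psibar j k * C j k
      + 2 * ∑ p ∈ Finset.univ.filter (fun p : Fin n × Fin n => p.1 < p.2),
          ((1 / (N : ℝ)) * ∑ m, R m j k * R m (z p.1) (z p.2)) * C (z p.1) (z p.2))
    (H : Matrix (Fin K) (Fin K) ℝ)
    (hH : ∀ j k, H j k = ∑ p ∈ Finset.univ.filter (fun p : Fin n × Fin n => p.1 < p.2 ∧
        ¬((z p.1 = j ∧ z p.2 = k) ∨ (z p.1 = k ∧ z p.2 = j))),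
          ((1 / (N : ℝ)) * ∑ m, R m j k * R m (z p.1) (z p.2)) * C (z p.1) (z p.2))
    (hPC : (Pim ⊙ C').IsHermitian)
    (γ : ℝ)
    (hγ : γ = Finset.univ.inf' ⟨⟨0, hK⟩, Finset.mem_univ _⟩ (fun i => |hPC.eigenvalues i|))
    (δ : ℝ)
    (hHbound : ∀ j k, |H j k| ≤ (1 - δ) * ((nmin : ℝ) ^ 2 / (K : ℝ)) * γ) :
    ∀ (hF' : F.IsHermitian),
      Finset.univ.inf' ⟨⟨0, hK⟩, Finset.mem_univ _⟩ (fun i => |hF'.eigenvalues i|) ≥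
        (2 * δ - 1) * (nmin : ℝ) ^ 2 * γ
        - (nmax : ℝ) *
            Finset.univ.sup' ⟨⟨0, hK⟩, Finset.mem_univ _⟩ (fun j => |Pim j j * C' j j|)
        - 2 * ‖Psibar ⊙ C‖ := by
  intro hF'
  have hdecomp := eq_diagonal_mul_hadamard_mul_diagonal_add z R hRsym C hCsym hPim hC' hF hH
  simp only [← hnsize] at hdecomp
  have : Nonempty (Fin K) := ⟨⟨0, hK⟩⟩
  have hγ0 : 0 ≤ γ := hγ ▸ Finset.le_inf' _ _ fun i _ => abs_nonneg _
  have hbelow := mul_norm_le_norm_toEuclideanCLM_diagonal_mul_mul_diagonal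
    (d := fun j => (nsize j : ℝ)) hPC (Nat.cast_nonneg nmin) hγ0
    (fun j => by
      rw [Real.norm_natCast]; exact_mod_cast hnmin ▸ Finset.inf'_le _ (Finset.mem_univ j))
    (fun i => hγ ▸ Finset.inf'_le _ (Finset.mem_univ i))
  have hE : ‖diagonal fun j => (nsize j : ℝ) * (Pim j j * C' j j)‖ ≤ nmax *
      Finset.univ.sup' ⟨⟨0, hK⟩, Finset.mem_univ _⟩ (fun j => |Pim j j * C' j j|) := by
    refine (l2_opNorm_diagonal _).trans_le <| (pi_norm_le_iff_of_nonempty _).2 fun j => ?_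
    rw [norm_mul, Real.norm_natCast, Real.norm_eq_abs]
    gcongr
    · exact_mod_cast hnmax ▸ Finset.le_sup' _ (Finset.mem_univ j)
    · exact Finset.le_sup' (fun j => |Pim j j * C' j j|) (Finset.mem_univ j)
  have hH' : ‖H‖ ≤ (1 - δ) * nmin ^ 2 * γ := by
    refine (l2_opNorm_le_card_mul fun j k =>
      (Real.norm_eq_abs (H j k)).trans_le (hHbound j k)).trans_eq ?_
    rw [Fintype.card_fin]
    field_simp
  refine Finset.le_inf' _ _ fun i _ => ?_
  have key := hF'.sub_l2_opNorm_sub_le_abs_eigenvalues hbelow i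
  rw [sub_eq_of_eq_add' hdecomp] at key
  grw [norm_add_le, norm_sub_le, norm_smul, norm_smul, Real.norm_ofNat, hE, hH'] at key
  linarith

/-- **Nonasymptotic form of Proposition 2.** If the cross-cell covariance terms `H_{jk}` are
bounded by `(1−δ)(n_min²/K)γ` with `γ = minᵢ|λᵢ(Π ∘ C′)| > 0`, then the smallest absolute
eigenvalue of `F` is at least
`(2δ−1) n_min² γ − n_max · maxⱼ|Π_jj C′_jj| − 2‖Ψ ∘ C‖`. -/
theorem smallest_eigenvalue_F_lower_bound
    (N n K : ℕ) (hN : 1 ≤ N) (hn : 2 ≤ n) (hK : 0 < K)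
    (z : Fin n → Fin K)
    (nsize : Fin K → ℕ)
    (hnsize : ∀ k, nsize k = (Finset.univ.filter (fun u : Fin n => z u = k)).card)
    (nmin nmax : ℕ)
    (hnmin : nmin = Finset.univ.inf' ⟨⟨0, hK⟩, Finset.mem_univ _⟩ nsize)
    (hnmax : nmax = Finset.univ.sup' ⟨⟨0, hK⟩, Finset.mem_univ _⟩ nsize)
    (hnmin2 : 2 ≤ nmin)
    (R Ψ : Fin N → Matrix (Fin K) (Fin K) ℝ)
    (hRsym : ∀ m, (R m).IsSymm) (hΨsym : ∀ m, (Ψ m).IsSymm)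
    (C : Matrix (Fin K) (Fin K) ℝ) (hCsym : C.IsSymm)
    (Pim Psibar : Matrix (Fin K) (Fin K) ℝ)
    (hPim : ∀ j k, Pim j k = (1 / (N : ℝ)) * ∑ m, (R m j k) ^ 2)
    (hPsibar : ∀ j k, Psibar j k = (1 / (N : ℝ)) * ∑ m, Ψ m j k)
    (C' : Matrix (Fin K) (Fin K) ℝ)
    (hC' : ∀ j k, C' j k = (if j ≠ k then 2 else 1) * C j k)
    (F : Matrix (Fin K) (Fin K) ℝ)
    (hF : ∀ j k, F j k = 2 * Psibar j k * C j k
      + 2 * ∑ p ∈ Finset.univ.filter (fun p : Fin n × Fin n => p.1 < p.2),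
          ((1 / (N : ℝ)) * ∑ m, R m j k * R m (z p.1) (z p.2)) * C (z p.1) (z p.2))
    (H : Matrix (Fin K) (Fin K) ℝ)
    (hH : ∀ j k, H j k = ∑ p ∈ Finset.univ.filter (fun p : Fin n × Fin n => p.1 < p.2 ∧
        ¬((z p.1 = j ∧ z p.2 = k) ∨ (z p.1 = k ∧ z p.2 = j))),
          ((1 / (N : ℝ)) * ∑ m, R m j k * R m (z p.1) (z p.2)) * C (z p.1) (z p.2))
    (hPC : (Pim ⊙ C').IsHermitian)
    (γ : ℝ)
    (hγ : γ = Finset.univ.inf' ⟨⟨0, hK⟩, Finset.mem_univ _⟩ (fun i => |hPC.eigenvalues i|))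
    (hγpos : 0 < γ)
    (δ : ℝ) (hδ0 : 0 < δ) (hδ1 : δ ≤ 1)
    (hHbound : ∀ j k, |H j k| ≤ (1 - δ) * ((nmin : ℝ) ^ 2 / (K : ℝ)) * γ) :
    ∀ (hF' : F.IsHermitian),
      Finset.univ.inf' ⟨⟨0, hK⟩, Finset.mem_univ _⟩ (fun i => |hF'.eigenvalues i|) ≥
        (2 * δ - 1) * (nmin : ℝ) ^ 2 * γ
        - (nmax : ℝ) *
            Finset.univ.sup' ⟨⟨0, hK⟩, Finset.mem_univ _⟩ (fun j => |Pim j j * C' j j|)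
        - 2 * ‖Psibar ⊙ C‖ :=
  smallest_eigenvalue_F_lower_bound_general N n K hK z nsize hnsize nmin nmax hnmin hnmax R hRsym C
    hCsym Pim Psibar hPim C' hC' F hF H hH hPC γ hγ δ hHbound
end

section
/- Let Z ∈ {0,1}^{n×K} be a membership matrix (exactly one 1 per row) with all community sizes n_k = (ZᵀZ)_{kk} positive, and let F ∈ ℝ^{K×K} be symmetric. Then the characteristic polynomial of the n×n matrix Z F Zᵀ equals X^{n−K} times the characteristic polynomial of the K×K matrix Θ^{1/2} F Θ^{1/2}, where Θ = ZᵀZ; in particular, the nonzero eigenvalues of Z F Zᵀ, counted with multiplicity, coincide with the nonzero eigenvalues of Θ^{1/2} F Θ^{1/2}. -/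
/-!
Since `ZᵀZ = Θ` is diagonal with nonnegative entries, `Θ = S²` for `S = Θ^{1/2}`. The
characteristic polynomial is invariant under cyclic permutation of a product, up to the power of
`X` accounting for the size difference, so `χ(Z F Zᵀ) = X^{n-K} χ(F ZᵀZ) = X^{n-K} χ(F S S)
= X^{n-K} χ(S F S)`. The factor `X^{n-K}` has no nonzero roots.
-/

open Matrix Polynomial

theorem Polynomial.rootMultiplicity_X_pow_mul {R : Type*} [CommRing R] [IsDomain R]
    {a : R} (ha : a ≠ 0) (k : ℕ) (p : R[X]) :
    (X ^ k * p).rootMultiplicity a = p.rootMultiplicity a := by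
  rcases eq_or_ne p 0 with rfl | hp
  · simp
  have hX : rootMultiplicity a ((X : R[X]) ^ k) = 0 :=
    rootMultiplicity_eq_zero (by simp [ha])
  rw [rootMultiplicity_mul (mul_ne_zero (pow_ne_zero _ X_ne_zero) hp), hX, zero_add]

namespace Matrix

theorem transpose_mul_self_of_membership {m n R : Type*} [Fintype m] [DecidableEq n]
    [NonAssocSemiring R] {z : m → n} {Z : Matrix m n R}
    (hZ : ∀ u k, Z u k = if z u = k then 1 else 0) :
    Zᵀ * Z = diagonal fun k => ((Finset.univ.filter fun u => z u = k).card : R) := by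
  ext k l
  simp only [mul_apply, transpose_apply, hZ, diagonal_apply, ite_mul, one_mul, zero_mul]
  split_ifs with hkl
  · subst hkl
    simp [Finset.sum_ite, Finset.filter_filter]
  · exact Finset.sum_eq_zero fun u _ => by grind

theorem charpoly_mul_mul_transpose_of_mul_self_eq {m n R : Type*} [Fintype m] [Fintype n]
    [DecidableEq m] [DecidableEq n] [CommRing R]
    (Z : Matrix m n R) (F S : Matrix n n R) (hS : S * S = Zᵀ * Z)
    (hle : Fintype.card n ≤ Fintype.card m) :
    (Z * F * Zᵀ).charpoly = X ^ (Fintype.card m - Fintype.card n) * (S * F * S).charpoly := by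
  rw [Matrix.mul_assoc, charpoly_mul_comm_of_le _ _ hle, Matrix.mul_assoc, ← hS,
    ← Matrix.mul_assoc, charpoly_mul_comm, ← Matrix.mul_assoc]

end Matrix

theorem charpoly_ZFZt_general
    (n K : ℕ) (hKn : K ≤ n)
    (z : Fin n → Fin K)
    (Z : Matrix (Fin n) (Fin K) ℝ)
    (hZ : ∀ u k, Z u k = if z u = k then 1 else 0)
    (F : Matrix (Fin K) (Fin K) ℝ)
    (sqrtΘ : Matrix (Fin K) (Fin K) ℝ)
    (hsqrtΘ : sqrtΘ = Matrix.diagonal (fun k => Real.sqrt ((Zᵀ * Z) k k))) :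
    (Z * F * Zᵀ).charpoly = X ^ (n - K) * (sqrtΘ * F * sqrtΘ).charpoly ∧
    ∀ μ : ℝ, μ ≠ 0 →
      (Z * F * Zᵀ).charpoly.rootMultiplicity μ
        = (sqrtΘ * F * sqrtΘ).charpoly.rootMultiplicity μ := by
  have hS : sqrtΘ * sqrtΘ = Zᵀ * Z := by
    rw [hsqrtΘ, diagonal_mul_diagonal, transpose_mul_self_of_membership hZ]
    simp [Real.mul_self_sqrt]
  have hcharpoly : (Z * F * Zᵀ).charpoly = X ^ (n - K) * (sqrtΘ * F * sqrtΘ).charpoly := by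
    simpa using charpoly_mul_mul_transpose_of_mul_self_eq Z F sqrtΘ hS (by simpa using hKn)
  exact ⟨hcharpoly, fun μ hμ => by rw [hcharpoly, rootMultiplicity_X_pow_mul hμ]⟩

/-- The characteristic polynomial of `Z F Zᵀ` equals `X^{n−K}` times the characteristic
polynomial of `Θ^{1/2} F Θ^{1/2}` with `Θ = ZᵀZ`; in particular the nonzero eigenvalues of
the two matrices coincide with multiplicity. -/
theorem charpoly_ZFZt
    (n K : ℕ) (hK : 0 < K) (hKn : K ≤ n)
    (z : Fin n → Fin K)
    (Z : Matrix (Fin n) (Fin K) ℝ)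
    (hZ : ∀ u k, Z u k = if z u = k then 1 else 0)
    (hpos : ∀ k : Fin K, 0 < (Finset.univ.filter (fun u : Fin n => z u = k)).card)
    (F : Matrix (Fin K) (Fin K) ℝ) (hF : F.IsHermitian)
    (sqrtΘ : Matrix (Fin K) (Fin K) ℝ)
    (hsqrtΘ : sqrtΘ = Matrix.diagonal (fun k => Real.sqrt ((Zᵀ * Z) k k))) :
    (Z * F * Zᵀ).charpoly = X ^ (n - K) * (sqrtΘ * F * sqrtΘ).charpoly ∧
    ∀ μ : ℝ, μ ≠ 0 →
      (Z * F * Zᵀ).charpoly.rootMultiplicity μ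
        = (sqrtΘ * F * sqrtΘ).charpoly.rootMultiplicity μ :=
  charpoly_ZFZt_general n K hKn z Z hZ F sqrtΘ hsqrtΘ
end

section
/- Let Z ∈ {0,1}^{n×K} be a membership matrix with all community sizes n_k positive, n_min = min_k n_k, let F ∈ ℝ^{K×K} be symmetric, and set E := Z F Zᵀ − diag(Z F Zᵀ), where diag(M) is the diagonal matrix with the same diagonal as M. Order the eigenvalues of the symmetric matrix E by decreasing absolute value, |λ_1(E)| ≥ … ≥ |λ_n(E)|. Then |λ_{K+1}(E)| ≤ max_{1≤k≤K} |F_{kk}| and |λ_K(E)| ≥ n_min · min_{1≤i≤K} |λ_i(F)| − max_{1≤k≤K} |F_{kk}|. -/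
/-!
Write `E = A - D` with `A = Z F Zᵀ` and `D = diag A`. Then `A` has rank at most `K`, and `D` has
operator norm at most `d = max_k |F_kk|`, since `A_uu = F_{z_u z_u}`. Both bounds are Weyl-type
perturbation inequalities proved by counting dimensions, as in Courant–Fischer. The span of the
`K + 1` leading eigenvectors of `E` meets `ker A` nontrivially, and on that intersection
`‖E x‖ = ‖D x‖ ≤ d ‖x‖`. The span of the trailing `n - K + 1` eigenvectors meets the `K`-dimensional
range of `Z`, and there `‖A x‖ ≥ n_min · minᵢ |λᵢ(F)| · ‖x‖` because `Zᵀ Z = diag(n_k)`.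
-/

open Matrix BigOperators
open Module Finset Submodule

namespace OrthonormalBasis

variable {ι 𝕜 E : Type*} [Fintype ι] [RCLike 𝕜] [NormedAddCommGroup E] [InnerProductSpace 𝕜 E]
  {b : OrthonormalBasis ι 𝕜 E} {μ : ι → 𝕜} {T : E →ₗ[𝕜] E}

theorem repr_apply_of_eigenbasis (hT : ∀ i, T (b i) = μ i • b i) (x : E) (i : ι) :
    b.repr (T x) i = μ i * b.repr x i := by
  classical
  conv_lhs => rw [← b.sum_repr x]
  simp [hT, smul_smul, Pi.single_apply, mul_comm]

theorem norm_sq_apply_of_eigenbasis (hT : ∀ i, T (b i) = μ i • b i) (x : E) :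
    ‖T x‖ ^ 2 = ∑ i, ‖μ i‖ ^ 2 * ‖b.repr x i‖ ^ 2 := by
  simp only [← b.repr.norm_map (T x), EuclideanSpace.norm_sq_eq, repr_apply_of_eigenbasis hT,
    norm_mul, mul_pow]

theorem mul_norm_le_norm_apply_of_eigenbasis (hT : ∀ i, T (b i) = μ i • b i) {c : ℝ} (x : E)
    (h : ∀ i, b.repr x i ≠ 0 → c ≤ ‖μ i‖) : c * ‖x‖ ≤ ‖T x‖ := by
  rcases lt_or_ge c 0 with hc | hc
  · exact (mul_nonpos_of_nonpos_of_nonneg hc.le (norm_nonneg x)).trans (norm_nonneg _)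
  rw [← pow_le_pow_iff_left₀ (by positivity) (norm_nonneg _) two_ne_zero, mul_pow,
    ← b.repr.norm_map x, EuclideanSpace.norm_sq_eq, norm_sq_apply_of_eigenbasis hT, mul_sum]
  refine sum_le_sum fun i _ => ?_
  by_cases hi : b.repr x i = 0
  · simp [hi]
  · gcongr; exact h i hi

theorem norm_apply_le_mul_norm_of_eigenbasis (hT : ∀ i, T (b i) = μ i • b i) {c : ℝ} (hc : 0 ≤ c)
    (x : E) (h : ∀ i, b.repr x i ≠ 0 → ‖μ i‖ ≤ c) : ‖T x‖ ≤ c * ‖x‖ := by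
  rw [← pow_le_pow_iff_left₀ (norm_nonneg _) (by positivity) two_ne_zero, mul_pow,
    ← b.repr.norm_map x, EuclideanSpace.norm_sq_eq, norm_sq_apply_of_eigenbasis hT, mul_sum]
  refine sum_le_sum fun i _ => ?_
  by_cases hi : b.repr x i = 0
  · simp [hi]
  · gcongr; exact h i hi

theorem mem_of_repr_ne_zero {s : Set ι} {x : E} (hx : x ∈ span 𝕜 (b '' s)) {i : ι}
    (hi : b.repr x i ≠ 0) : i ∈ s := by
  rw [← b.coe_toBasis, Basis.mem_span_image] at hx
  exact hx (by simpa using hi)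

theorem finrank_span_image (b : OrthonormalBasis ι 𝕜 E) (s : Finset ι) :
    finrank 𝕜 (span 𝕜 (b '' s)) = #s := by
  rw [Set.image_eq_range, finrank_span_eq_card]
  · simp only [Finset.coe_sort_coe, Fintype.card_coe]
  · exact b.orthonormal.linearIndependent.comp _ Subtype.val_injective

end OrthonormalBasis

theorem Submodule.exists_mem_mem_ne_zero_of_finrank_lt {K V : Type*} [DivisionRing K]
    [AddCommGroup V] [Module K V] [FiniteDimensional K V] {s t : Submodule K V}
    (h : finrank K V < finrank K s + finrank K t) : ∃ x ∈ s, x ∈ t ∧ x ≠ 0 := by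
  by_contra! H
  exact h.not_ge (finrank_add_finrank_le_of_disjoint (disjoint_def.2 H))

namespace OrthonormalBasis

variable {𝕜 E : Type*} [RCLike 𝕜] [NormedAddCommGroup E] [InnerProductSpace 𝕜 E] {n : ℕ}
  {b : OrthonormalBasis (Fin n) 𝕜 E} {μ : Fin n → 𝕜} {T A D : E →ₗ[𝕜] E} {d : ℝ}

theorem norm_eigenvalue_le_of_finrank_range_le (hb : ∀ i, T (b i) = μ i • b i)
    (hμ : Antitone fun i => ‖μ i‖) (hT : T = A - D) (hD : ∀ x, ‖D x‖ ≤ d * ‖x‖) {j : Fin n}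
    (hA : finrank 𝕜 (LinearMap.range A) ≤ j) : ‖μ j‖ ≤ d := by
  have := b.toBasis.finiteDimensional_of_finite
  have hE : finrank 𝕜 E = n := (finrank_eq_card_basis b.toBasis).trans (Fintype.card_fin n)
  obtain ⟨x, hxU, hxA, hx⟩ := exists_mem_mem_ne_zero_of_finrank_lt
    (s := span 𝕜 (b '' ↑(Iic j))) (t := LinearMap.ker A) (by
      rw [finrank_span_image, Fin.card_Iic]
      have := A.finrank_range_add_finrank_ker
      omega)
  have hlow : ‖μ j‖ * ‖x‖ ≤ ‖T x‖ := b.mul_norm_le_norm_apply_of_eigenbasis hb x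
    fun i hi => hμ (mem_Iic.1 (mem_of_repr_ne_zero hxU hi))
  have hTx : T x = -D x := by simp [hT, LinearMap.mem_ker.1 hxA]
  rw [hTx, norm_neg] at hlow
  exact le_of_mul_le_mul_right (hlow.trans (hD x)) (norm_pos_iff.2 hx)

theorem sub_le_norm_eigenvalue_of_lt_finrank (hb : ∀ i, T (b i) = μ i • b i)
    (hμ : Antitone fun i => ‖μ i‖) (hT : T = A - D) (hD : ∀ x, ‖D x‖ ≤ d * ‖x‖)
    {W : Submodule 𝕜 E} {c : ℝ} (hA : ∀ x ∈ W, c * ‖x‖ ≤ ‖A x‖) {j : Fin n}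
    (hW : j < finrank 𝕜 W) : c - d ≤ ‖μ j‖ := by
  have := b.toBasis.finiteDimensional_of_finite
  have hE : finrank 𝕜 E = n := (finrank_eq_card_basis b.toBasis).trans (Fintype.card_fin n)
  obtain ⟨x, hxU, hxW, hx⟩ := exists_mem_mem_ne_zero_of_finrank_lt
    (s := span 𝕜 (b '' ↑(Ici j))) (t := W) (by
      rw [finrank_span_image, Fin.card_Ici]
      omega)
  have hup : ‖T x‖ ≤ ‖μ j‖ * ‖x‖ := b.norm_apply_le_mul_norm_of_eigenbasis hb (norm_nonneg _) x
    fun i hi => hμ (mem_Ici.1 (mem_of_repr_ne_zero hxU hi))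
  have hlow : (c - d) * ‖x‖ ≤ ‖T x‖ :=
    calc (c - d) * ‖x‖ = c * ‖x‖ - d * ‖x‖ := sub_mul _ _ _
      _ ≤ ‖A x‖ - ‖D x‖ := sub_le_sub (hA x hxW) (hD x)
      _ ≤ ‖T x‖ := by rw [hT]; exact norm_sub_norm_le _ _
  exact le_of_mul_le_mul_right (hlow.trans hup) (norm_pos_iff.2 hx)

end OrthonormalBasis

namespace Matrix

theorem IsHermitian.toEuclideanLin_eigenvectorBasis {ι 𝕜 : Type*} [Fintype ι] [DecidableEq ι]
    [RCLike 𝕜] {A : Matrix ι ι 𝕜} (hA : A.IsHermitian) (i : ι) :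
    toEuclideanLin A (hA.eigenvectorBasis i) = (hA.eigenvalues i : 𝕜) • hA.eigenvectorBasis i := by
  ext1
  rw [toLpLin_apply, WithLp.ofLp_toLp, hA.mulVec_eigenvectorBasis, WithLp.ofLp_smul,
    RCLike.real_smul_eq_coe_smul (K := 𝕜)]

theorem norm_toEuclideanLin_diagonal_le_s10 {ι 𝕜 : Type*} [Fintype ι] [DecidableEq ι] [RCLike 𝕜]
    {g : ι → 𝕜} {d : ℝ} (hd : 0 ≤ d) (hg : ∀ i, ‖g i‖ ≤ d) (x : EuclideanSpace 𝕜 ι) :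
    ‖toEuclideanLin (diagonal g) x‖ ≤ d * ‖x‖ :=
  (EuclideanSpace.basisFun ι 𝕜).norm_apply_le_mul_norm_of_eigenbasis
    (fun i => by ext; simp [Pi.single_apply]) hd x fun i _ => hg i

theorem finrank_range_toEuclideanLin_mul_le {l m o 𝕜 : Type*} [Fintype m] [DecidableEq m]
    [Fintype o] [DecidableEq o] [RCLike 𝕜] (A : Matrix l m 𝕜) (B : Matrix m o 𝕜) :
    finrank 𝕜 (LinearMap.range (toEuclideanLin (A * B))) ≤ Fintype.card m := by
  rw [toLpLin_mul_same]
  refine (finrank_mono (LinearMap.range_comp_le_range _ _)).trans ?_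
  simpa using LinearMap.finrank_range_le (toEuclideanLin A)

end Matrix

section Membership

variable {α κ : Type*} [DecidableEq κ] (z : α → κ)

def membershipMatrix : Matrix α κ ℝ := Matrix.of fun u k => if z u = k then 1 else 0

def communitySize [Fintype α] (k : κ) : ℕ := #{u | z u = k}

theorem transpose_membershipMatrix_mul_membershipMatrix [Fintype α] :
    (membershipMatrix z)ᵀ * membershipMatrix z = diagonal fun k => (communitySize z k : ℝ) := by
  ext k l
  simp only [membershipMatrix, communitySize, mul_apply, transpose_apply, of_apply, diagonal_apply,
    mul_ite, mul_one, mul_zero, ← ite_and, sum_boole]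
  split_ifs with h
  · simp [h]
  · simp [filter_false_of_mem fun x _ (hx : z x = l ∧ z x = k) => h (hx.2.symm.trans hx.1)]

variable [Fintype κ]

theorem membershipMatrix_mulVec (w : κ → ℝ) : membershipMatrix z *ᵥ w = w ∘ z := by
  ext u
  simp [membershipMatrix, mulVec, dotProduct]

theorem membershipMatrix_mul_mul_transpose_apply (M : Matrix κ κ ℝ) (u v : α) :
    (membershipMatrix z * M * (membershipMatrix z)ᵀ) u v = M (z u) (z v) := by
  simp [membershipMatrix, mul_apply]

variable {z}

theorem injective_toEuclideanLin_membershipMatrix (hz : Function.Surjective z) :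
    Function.Injective (toEuclideanLin (membershipMatrix z)) := by
  intro w w' h
  ext k
  obtain ⟨u, rfl⟩ := hz k
  simpa [toLpLin_apply, membershipMatrix_mulVec] using congr_fun (congrArg WithLp.ofLp h) u

theorem finrank_range_toEuclideanLin_membershipMatrix (hz : Function.Surjective z) :
    finrank ℝ (LinearMap.range (toEuclideanLin (membershipMatrix z))) = Fintype.card κ := by
  rw [LinearMap.finrank_range_of_inj (injective_toEuclideanLin_membershipMatrix hz),
    finrank_euclideanSpace]

variable [Fintype α]

theorem norm_toEuclideanLin_diagonal_conj_membershipMatrix_le [DecidableEq α] {M : Matrix κ κ ℝ}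
    {d : ℝ} (hd : 0 ≤ d) (hM : ∀ k, |M k k| ≤ d) (x : EuclideanSpace ℝ α) :
    ‖toEuclideanLin (diagonal fun u => (membershipMatrix z * M * (membershipMatrix z)ᵀ) u u) x‖ ≤
      d * ‖x‖ :=
  norm_toEuclideanLin_diagonal_le_s10 hd (fun u => by
    rw [membershipMatrix_mul_mul_transpose_apply, Real.norm_eq_abs]
    exact hM _) x

theorem sum_comp_eq_sum_communitySize_smul {M : Type*} [AddCommMonoid M] (g : κ → M) :
    ∑ u, g (z u) = ∑ k, communitySize z k • g k := by
  rw [← sum_fiberwise univ z]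
  refine sum_congr rfl fun k _ => ?_
  rw [sum_congr rfl fun u hu => by rw [(mem_filter.1 hu).2], sum_const]
  rfl

theorem norm_sq_toEuclideanLin_membershipMatrix (w : EuclideanSpace ℝ κ) :
    ‖toEuclideanLin (membershipMatrix z) w‖ ^ 2 = ∑ k, communitySize z k * ‖w k‖ ^ 2 := by
  rw [EuclideanSpace.norm_sq_eq]
  simpa only [toLpLin_apply, WithLp.ofLp_toLp, membershipMatrix_mulVec, Function.comp_apply,
    nsmul_eq_mul] using sum_comp_eq_sum_communitySize_smul fun k => ‖w k‖ ^ 2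

variable {s : ℝ}

theorem mul_norm_sq_le_norm_sq_toEuclideanLin_membershipMatrix
    (hs : ∀ k, s ≤ communitySize z k) (w : EuclideanSpace ℝ κ) :
    s * ‖w‖ ^ 2 ≤ ‖toEuclideanLin (membershipMatrix z) w‖ ^ 2 := by
  rw [norm_sq_toEuclideanLin_membershipMatrix, EuclideanSpace.norm_sq_eq, mul_sum]
  gcongr
  exact hs _

theorem mul_norm_sq_toEuclideanLin_membershipMatrix_le_diagonal
    (hs : ∀ k, s ≤ communitySize z k) (w : EuclideanSpace ℝ κ) :
    s * ‖toEuclideanLin (membershipMatrix z) w‖ ^ 2 ≤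
      ‖toEuclideanLin (diagonal fun k => (communitySize z k : ℝ)) w‖ ^ 2 := by
  rw [norm_sq_toEuclideanLin_membershipMatrix, mul_sum, EuclideanSpace.norm_sq_eq]
  simp only [toLpLin_apply, WithLp.ofLp_toLp, mulVec_diagonal, norm_mul, Real.norm_natCast,
    mul_pow]
  refine sum_le_sum fun k _ => ?_
  rw [sq (communitySize z k : ℝ), mul_assoc]
  gcongr
  exact hs k

theorem mul_norm_le_norm_toEuclideanLin_conj_membershipMatrix [DecidableEq α]
    {F : Matrix κ κ ℝ} {m : ℝ} (hm : 0 ≤ m) (hs₀ : 0 ≤ s)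
    (hF : ∀ w, m * ‖w‖ ≤ ‖toEuclideanLin F w‖) (hs : ∀ k, s ≤ communitySize z k) :
    ∀ x ∈ LinearMap.range (toEuclideanLin (membershipMatrix z)),
      s * m * ‖x‖ ≤ ‖toEuclideanLin (membershipMatrix z * F * (membershipMatrix z)ᵀ) x‖ := by
  rintro _ ⟨w, rfl⟩
  set Z := toEuclideanLin (membershipMatrix z)
  set N := toEuclideanLin (diagonal fun k => (communitySize z k : ℝ))
  have hZFZt : toEuclideanLin (membershipMatrix z * F * (membershipMatrix z)ᵀ) (Z w) =
      Z (toEuclideanLin F (N w)) := by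
    rw [← LinearMap.comp_apply, ← toLpLin_mul_same, Matrix.mul_assoc,
      transpose_membershipMatrix_mul_membershipMatrix]
    simp [Z, N]
  rw [hZFZt, ← pow_le_pow_iff_left₀ (by positivity) (norm_nonneg _) two_ne_zero]
  calc (s * m * ‖Z w‖) ^ 2 = s * m ^ 2 * (s * ‖Z w‖ ^ 2) := by ring
    _ ≤ s * m ^ 2 * ‖N w‖ ^ 2 := by
      gcongr; exact mul_norm_sq_toEuclideanLin_membershipMatrix_le_diagonal hs w
    _ = s * (m * ‖N w‖) ^ 2 := by ring
    _ ≤ s * ‖toEuclideanLin F (N w)‖ ^ 2 := by gcongr; exact hF _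
    _ ≤ ‖Z (toEuclideanLin F (N w))‖ ^ 2 :=
      mul_norm_sq_le_norm_sq_toEuclideanLin_membershipMatrix hs _

end Membership

/-- For `E = Z F Zᵀ − diag(Z F Zᵀ)`, with eigenvalues of `E` ordered by decreasing absolute
value, `|λ_{K+1}(E)| ≤ max_k |F_kk|` and `|λ_K(E)| ≥ n_min · minᵢ|λᵢ(F)| − max_k |F_kk|`. -/
theorem eigenvalue_gap_E
    (n K : ℕ) (hK : 0 < K) (hnK : K < n)
    (z : Fin n → Fin K)
    (Z : Matrix (Fin n) (Fin K) ℝ)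
    (hZ : ∀ u k, Z u k = if z u = k then 1 else 0)
    (nsize : Fin K → ℕ)
    (hnsize : ∀ k, nsize k = (Finset.univ.filter (fun u : Fin n => z u = k)).card)
    (hpos : ∀ k, 0 < nsize k)
    (nmin : ℕ)
    (hnmin : nmin = Finset.univ.inf' ⟨⟨0, hK⟩, Finset.mem_univ _⟩ nsize)
    (F : Matrix (Fin K) (Fin K) ℝ) (hF : F.IsHermitian)
    (E : Matrix (Fin n) (Fin n) ℝ)
    (hE : E = Z * F * Zᵀ - Matrix.diagonal (fun u => (Z * F * Zᵀ) u u))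
    (hEherm : E.IsHermitian)
    -- an enumeration of the eigenvalues of `E` in decreasing order of absolute value
    (e : Fin n → ℝ) (σ : Equiv.Perm (Fin n))
    (he : e = hEherm.eigenvalues ∘ σ)
    (hdec : Antitone (fun i => |e i|)) :
    |e ⟨K, hnK⟩| ≤ Finset.univ.sup' ⟨⟨0, hK⟩, Finset.mem_univ _⟩ (fun k => |F k k|) ∧
    |e ⟨K - 1, by omega⟩| ≥
      (nmin : ℝ) *
        Finset.univ.inf' ⟨⟨0, hK⟩, Finset.mem_univ _⟩ (fun i => |hF.eigenvalues i|)
      - Finset.univ.sup' ⟨⟨0, hK⟩, Finset.mem_univ _⟩ (fun k => |F k k|) := by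
  set d := univ.sup' ⟨⟨0, hK⟩, mem_univ _⟩ fun k => |F k k|
  set m := univ.inf' ⟨⟨0, hK⟩, mem_univ _⟩ fun i => |hF.eigenvalues i|
  obtain rfl : Z = membershipMatrix z := Matrix.ext hZ
  set b := hEherm.eigenvectorBasis.reindex σ.symm
  have hb : ∀ i, toEuclideanLin E (b i) = e i • b i := fun i => by
    simp [b, he, hEherm.toEuclideanLin_eigenvectorBasis]
  have hμ : Antitone fun i => ‖e i‖ := by simpa only [Real.norm_eq_abs] using hdec
  have hT := congrArg toEuclideanLin hE
  rw [map_sub] at hT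
  have hD := norm_toEuclideanLin_diagonal_conj_membershipMatrix_le (z := z)
    ((abs_nonneg _).trans (le_sup' (fun k => |F k k|) (mem_univ ⟨0, hK⟩)))
    fun k => le_sup' (fun k => |F k k|) (mem_univ k)
  have hz : Function.Surjective z := fun k => by
    obtain ⟨u, hu⟩ := card_pos.1 ((hpos k).trans_eq (hnsize k))
    exact ⟨u, (mem_filter.1 hu).2⟩
  have hs : ∀ k, (nmin : ℝ) ≤ communitySize z k := fun k => by
    rw [communitySize, ← hnsize, hnmin]
    exact_mod_cast inf'_le _ (mem_univ k)
  have hFm : ∀ w, m * ‖w‖ ≤ ‖toEuclideanLin F w‖ := fun w =>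
    hF.eigenvectorBasis.mul_norm_le_norm_apply_of_eigenbasis hF.toEuclideanLin_eigenvectorBasis w
      fun i _ => inf'_le _ (mem_univ i)
  constructor
  · simpa [Real.norm_eq_abs] using b.norm_eigenvalue_le_of_finrank_range_le hb hμ hT hD
      (j := ⟨K, hnK⟩)
      (by simpa using finrank_range_toEuclideanLin_mul_le (membershipMatrix z * F) _)
  · simpa [Real.norm_eq_abs] using b.sub_le_norm_eigenvalue_of_lt_finrank hb hμ hT hD
      (mul_norm_le_norm_toEuclideanLin_conj_membershipMatrix (le_inf' _ _ fun i _ => abs_nonneg _)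
        (Nat.cast_nonneg _) hFm hs) (j := ⟨K - 1, by omega⟩)
      (by simp [finrank_range_toEuclideanLin_membershipMatrix hz]; omega)
end

section
/- (No-community-structure scenario.) Suppose each connectivity matrix is constant, R^{(m)} = p^{(m)} · 𝟙𝟙ᵀ for scalars p^{(1)},…,p^{(N)} ∈ ℝ, set ξ₁ := (1/N)∑_{m=1}^N (p^{(m)})², and suppose the standardization Π_{jk} + Ψ_{jk} = 1 holds for all j,k. Then F = 2(1−ξ₁) C + c · 𝟙𝟙ᵀ with c := 2 ξ₁ ∑_{(s,t)∈P} C_{z_s z_t}, and consequently the smallest absolute eigenvalue of F satisfies min_{1≤i≤K} |λ_i(F)| ≥ 2(1−ξ₁) · min_{1≤i≤K} |λ_i(C)| − |c| K. -/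
/-!
Constant connectivity matrices make every average `(1/N) ∑ₘ R⁽ᵐ⁾_{jk} R⁽ᵐ⁾_{st}` equal to `ξ₁`,
so `Π ≡ ξ₁`, the standardization forces `Ψ̄ ≡ 1 - ξ₁`, and the formula `F = a C + c 𝟙𝟙ᵀ` with
`a = 2(1 - ξ₁)` follows entrywise. For the eigenvalue bound take a unit eigenvector `v` of `F`
realizing `minᵢ |λᵢ(F)|`: then `minᵢ |λᵢ(F)| = ‖F v‖ ≥ |a| ‖C v‖ - |c| ‖𝟙𝟙ᵀ v‖`, where
`‖C v‖ ≥ minᵢ |λᵢ(C)|` by diagonalizing `C` in an orthonormal eigenbasis, and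
`‖𝟙𝟙ᵀ v‖ = |⟪𝟙, v⟫| ‖𝟙‖ ≤ ‖𝟙‖² = K` by Cauchy–Schwarz.
-/

open Matrix BigOperators

namespace Matrix

variable {𝕜 ι : Type*} [RCLike 𝕜] [Fintype ι] [DecidableEq ι]

theorem norm_toEuclideanLin_ones_le (v : EuclideanSpace 𝕜 ι) :
    ‖toEuclideanLin (of fun _ _ : ι => (1 : 𝕜)) v‖ ≤ Fintype.card ι * ‖v‖ := by
  set e : EuclideanSpace 𝕜 ι := WithLp.toLp 2 fun _ => 1
  have hJ : toEuclideanLin (of fun _ _ : ι => (1 : 𝕜)) v = inner 𝕜 e v • e := by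
    ext j
    simp [e, mulVec, dotProduct, PiLp.inner_apply]
  have he : ‖e‖ ^ 2 = Fintype.card ι := by
    simp [e, EuclideanSpace.norm_sq_eq]
  calc ‖toEuclideanLin (of fun _ _ : ι => (1 : 𝕜)) v‖ = ‖inner 𝕜 e v‖ * ‖e‖ := by
        rw [hJ, norm_smul]
    _ ≤ ‖e‖ * ‖v‖ * ‖e‖ := by gcongr; exact norm_inner_le_norm e v
    _ = Fintype.card ι * ‖v‖ := by rw [← he]; ring

namespace IsHermitian

variable {A : Matrix ι ι 𝕜}

theorem toEuclideanLin_eigenvectorBasis_s14 (hA : A.IsHermitian) (i : ι) :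
    toEuclideanLin A (hA.eigenvectorBasis i)
      = (hA.eigenvalues i : 𝕜) • hA.eigenvectorBasis i := by
  ext j
  simpa using congrFun (hA.mulVec_eigenvectorBasis i) j

theorem eigenvectorBasis_repr_toEuclideanLin_s14 (hA : A.IsHermitian) (v : EuclideanSpace 𝕜 ι)
    (i : ι) :
    hA.eigenvectorBasis.repr (toEuclideanLin A v) i
      = hA.eigenvalues i * hA.eigenvectorBasis.repr v i := by
  rw [OrthonormalBasis.repr_apply_apply, OrthonormalBasis.repr_apply_apply,
    ← isSymmetric_toEuclideanLin_iff.mpr hA, toEuclideanLin_eigenvectorBasis_s14, inner_smul_left,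
    RCLike.conj_ofReal]

theorem inf'_abs_eigenvalues_mul_norm_le (hA : A.IsHermitian)
    (hne : (Finset.univ : Finset ι).Nonempty) (v : EuclideanSpace 𝕜 ι) :
    Finset.univ.inf' hne (fun i => |hA.eigenvalues i|) * ‖v‖ ≤ ‖toEuclideanLin A v‖ := by
  set b := hA.eigenvectorBasis
  have hsq : (Finset.univ.inf' hne (fun i => |hA.eigenvalues i|) * ‖v‖) ^ 2
      ≤ ‖toEuclideanLin A v‖ ^ 2 := by
    rw [mul_pow, ← b.repr.norm_map v, ← b.repr.norm_map (toEuclideanLin A v),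
      EuclideanSpace.norm_sq_eq, EuclideanSpace.norm_sq_eq, Finset.mul_sum]
    gcongr with i
    rw [eigenvectorBasis_repr_toEuclideanLin_s14, norm_mul, RCLike.norm_ofReal, mul_pow]
    gcongr
    · exact Finset.le_inf' _ _ fun i _ => abs_nonneg _
    · exact Finset.inf'_le _ (Finset.mem_univ i)
  exact le_of_pow_le_pow_left₀ two_ne_zero (norm_nonneg _) hsq

theorem norm_toEuclideanLin_eigenvectorBasis (hA : A.IsHermitian) (i : ι) :
    ‖toEuclideanLin A (hA.eigenvectorBasis i)‖ = |hA.eigenvalues i| := by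
  rw [toEuclideanLin_eigenvectorBasis_s14, norm_smul, RCLike.norm_ofReal,
    hA.eigenvectorBasis.norm_eq_one, mul_one]

theorem sub_le_inf'_abs_eigenvalues_of_eq_smul_add {B E : Matrix ι ι 𝕜} (hA : A.IsHermitian)
    (hB : B.IsHermitian) (hne : (Finset.univ : Finset ι).Nonempty) {a β : ℝ}
    (hE : ∀ v, ‖toEuclideanLin E v‖ ≤ β * ‖v‖) (hBAE : B = a • A + E) :
    a * Finset.univ.inf' hne (fun i => |hA.eigenvalues i|) - β
      ≤ Finset.univ.inf' hne (fun i => |hB.eigenvalues i|) := by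
  obtain ⟨i, -, hi⟩ := Finset.exists_mem_eq_inf' hne (fun i => |hB.eigenvalues i|)
  set v := hB.eigenvectorBasis i
  have hv : ‖v‖ = 1 := hB.eigenvectorBasis.norm_eq_one i
  have hm : 0 ≤ Finset.univ.inf' hne (fun i => |hA.eigenvalues i|) :=
    Finset.le_inf' _ _ fun i _ => abs_nonneg _
  rw [hi, ← norm_toEuclideanLin_eigenvectorBasis hB i]
  calc a * Finset.univ.inf' hne (fun i => |hA.eigenvalues i|) - β
      ≤ |a| * (Finset.univ.inf' hne (fun i => |hA.eigenvalues i|) * ‖v‖)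
          - ‖toEuclideanLin E v‖ := by
        rw [hv, mul_one]
        gcongr
        · exact le_abs_self a
        · simpa [hv] using hE v
    _ ≤ ‖a • toEuclideanLin A v‖ - ‖toEuclideanLin E v‖ := by
        rw [norm_smul, Real.norm_eq_abs]
        gcongr
        exact inf'_abs_eigenvalues_mul_norm_le hA hne v
    _ ≤ ‖a • toEuclideanLin A v + toEuclideanLin E v‖ := norm_sub_le_norm_add _ _
    _ = ‖toEuclideanLin B v‖ := by
        congr 1
        ext j
        simp [hBAE, smul_mulVec]

end IsHermitian

end Matrix

theorem no_community_structure_scenario_general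
    (N n K : ℕ) (hK : 0 < K)
    (z : Fin n → Fin K)
    (R : Fin N → Matrix (Fin K) (Fin K) ℝ)
    (C : Matrix (Fin K) (Fin K) ℝ) (hC : C.IsHermitian)
    (Pim Psibar : Matrix (Fin K) (Fin K) ℝ)
    (hPim : ∀ j k, Pim j k = (1 / (N : ℝ)) * ∑ m, (R m j k) ^ 2)
    (F : Matrix (Fin K) (Fin K) ℝ)
    (hF : ∀ j k, F j k = 2 * Psibar j k * C j k
      + 2 * ∑ p ∈ Finset.univ.filter (fun p : Fin n × Fin n => p.1 < p.2),
          ((1 / (N : ℝ)) * ∑ m, R m j k * R m (z p.1) (z p.2)) * C (z p.1) (z p.2))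
    -- constant connectivity matrices
    (p : Fin N → ℝ) (hconst : ∀ m j k, R m j k = p m)
    (ξ₁ : ℝ) (hξ₁ : ξ₁ = (1 / (N : ℝ)) * ∑ m, (p m) ^ 2)
    -- standardization
    (hvar : ∀ j k : Fin K, Pim j k + Psibar j k = 1)
    (c : ℝ)
    (hc : c = 2 * ξ₁ * ∑ q ∈ Finset.univ.filter (fun q : Fin n × Fin n => q.1 < q.2),
      C (z q.1) (z q.2)) :
    F = (2 * (1 - ξ₁)) • C + c • Matrix.of (fun _ _ : Fin K => (1 : ℝ)) ∧
    ∀ (hF' : F.IsHermitian),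
      Finset.univ.inf' ⟨⟨0, hK⟩, Finset.mem_univ _⟩ (fun i => |hF'.eigenvalues i|) ≥
        2 * (1 - ξ₁) *
          Finset.univ.inf' ⟨⟨0, hK⟩, Finset.mem_univ _⟩ (fun i => |hC.eigenvalues i|)
        - |c| * (K : ℝ) := by
  have hPsibar : ∀ j k, Psibar j k = 1 - ξ₁ := fun j k => by
    have hPim_eq : Pim j k = ξ₁ := by simp only [hPim, hconst, hξ₁]
    linarith [hvar j k]
  have hF_eq : F = (2 * (1 - ξ₁)) • C + c • of (fun _ _ : Fin K => (1 : ℝ)) := by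
    have hcoef : ∀ j k s t, (1 / (N : ℝ)) * ∑ m, R m j k * R m s t = ξ₁ := fun j k s t => by
      simp only [hconst, hξ₁, sq]
    ext j k
    simp only [hF, hPsibar, hcoef, ← Finset.mul_sum, hc, Matrix.add_apply, Matrix.smul_apply,
      of_apply, smul_eq_mul]
    ring
  refine ⟨hF_eq, fun hF' => ?_⟩
  refine (hC.sub_le_inf'_abs_eigenvalues_of_eq_smul_add hF' _ (fun v => ?_) hF_eq).ge
  rw [LinearEquiv.map_smul, LinearMap.smul_apply, norm_smul, Real.norm_eq_abs, mul_assoc]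
  gcongr
  simpa using norm_toEuclideanLin_ones_le v

/-- **No-community-structure scenario.** If each connectivity matrix is constant,
`R⁽ᵐ⁾ = p⁽ᵐ⁾𝟙𝟙ᵀ`, and the standardization holds, then `F = 2(1−ξ₁) C + c 𝟙𝟙ᵀ` with
`c = 2ξ₁ ∑_{(s,t)∈P} C_{z_s z_t}`, and the smallest absolute eigenvalue of `F` is at least
`2(1−ξ₁) minᵢ|λᵢ(C)| − |c| K`. -/
theorem no_community_structure_scenario
    (N n K : ℕ) (hN : 1 ≤ N) (hn : 2 ≤ n) (hK : 0 < K)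
    (z : Fin n → Fin K)
    (R Ψ : Fin N → Matrix (Fin K) (Fin K) ℝ)
    (hRsym : ∀ m, (R m).IsSymm) (hΨsym : ∀ m, (Ψ m).IsSymm)
    (C : Matrix (Fin K) (Fin K) ℝ) (hC : C.IsHermitian)
    (Pim Psibar : Matrix (Fin K) (Fin K) ℝ)
    (hPim : ∀ j k, Pim j k = (1 / (N : ℝ)) * ∑ m, (R m j k) ^ 2)
    (hPsibar : ∀ j k, Psibar j k = (1 / (N : ℝ)) * ∑ m, Ψ m j k)
    (F : Matrix (Fin K) (Fin K) ℝ)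
    (hF : ∀ j k, F j k = 2 * Psibar j k * C j k
      + 2 * ∑ p ∈ Finset.univ.filter (fun p : Fin n × Fin n => p.1 < p.2),
          ((1 / (N : ℝ)) * ∑ m, R m j k * R m (z p.1) (z p.2)) * C (z p.1) (z p.2))
    -- constant connectivity matrices
    (p : Fin N → ℝ) (hconst : ∀ m j k, R m j k = p m)
    (ξ₁ : ℝ) (hξ₁ : ξ₁ = (1 / (N : ℝ)) * ∑ m, (p m) ^ 2)
    -- standardization
    (hvar : ∀ j k : Fin K, Pim j k + Psibar j k = 1)
    (c : ℝ)
    (hc : c = 2 * ξ₁ * ∑ q ∈ Finset.univ.filter (fun q : Fin n × Fin n => q.1 < q.2),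
      C (z q.1) (z q.2)) :
    F = (2 * (1 - ξ₁)) • C + c • Matrix.of (fun _ _ : Fin K => (1 : ℝ)) ∧
    ∀ (hF' : F.IsHermitian),
      Finset.univ.inf' ⟨⟨0, hK⟩, Finset.mem_univ _⟩ (fun i => |hF'.eigenvalues i|) ≥
        2 * (1 - ξ₁) *
          Finset.univ.inf' ⟨⟨0, hK⟩, Finset.mem_univ _⟩ (fun i => |hC.eigenvalues i|)
        - |c| * (K : ℝ) :=
  no_community_structure_scenario_general N n K hK z R C hC Pim Psibar hPim F hF p hconst ξ₁ hξ₁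
    hvar c hc
end
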